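/- arXiv:2408.02902 — 8 statements merged into one kernel-verified Lean document; each statement's English description precedes it below -/
import Mathlib

section
/- For every bounded function u : V → ℝ and every x ∈ V, the integral (s/Γ(1−s)) ∫_0^∞ (u(x) − Σ_{y∈V} p(t,x,y) u(y) μ(y)) t^{−1−s} dt converges and equals (1/μ(x)) Σ_{y∈V, y≠x} W_s(x,y)(u(x) − u(y)); moreover W_s(x,y) = W_s(y,x) ≥ 0 for all x ≠ y and Σ_{y∈V, y≠x} W_s(x,y) < +∞ for every x ∈ V. -/
open Filter Topology MeasureTheory

/-- The discrete kernel `W_s(x,y)` (set to `0` on the diagonal), defined for `x ≠ y` by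
`W_s(x,y) = (s/Γ(1−s)) μ(x) μ(y) ∫_0^∞ p(t,x,y) t^{−1−s} dt`. -/
noncomputable def Wker {V : Type*} [DecidableEq V] (μ : V → ℝ) (s : ℝ) (p : ℝ → V → V → ℝ) (x y : V) : ℝ :=
  if y = x then 0 else
    (s / Real.Gamma (1 - s)) * μ x * μ y * ∫ t in Set.Ioi (0 : ℝ), p t x y * t ^ (-1 - s)


section AuxLemmas
open Set MeasureTheory

lemma aux_integrable_pow {s M : ℝ} (hs0 : 0 < s) (hs1 : s < 1) (hM : 0 ≤ M)
    {g : ℝ → ℝ} (hg_cont : ContinuousOn g (Set.Ici 0))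
    (hg0 : ∀ t, 0 < t → 0 ≤ g t) (hg1 : ∀ t, 1 < t → g t ≤ 1)
    (hgt : ∀ t ∈ Set.Ioc (0:ℝ) 1, g t ≤ M * t) :
    IntegrableOn (fun t => g t * t ^ (-1 - s)) (Set.Ioi (0:ℝ)) := by
  have hpow : ContinuousOn (fun t : ℝ => t ^ (-1 - s)) (Set.Ioi 0) := by
    intro t ht
    exact (Real.continuousAt_rpow_const t _ (Or.inl (ne_of_gt ht))).continuousWithinAt
  have hmeas : ∀ (S : Set ℝ), MeasurableSet S → S ⊆ Set.Ioi 0 →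
      AEStronglyMeasurable (fun t => g t * t ^ (-1 - s)) (volume.restrict S) := by
    intro S hS hSsub
    exact ((hg_cont.mono (hSsub.trans Set.Ioi_subset_Ici_self)).mul
      (hpow.mono hSsub)).aestronglyMeasurable hS
  rw [show Set.Ioi (0:ℝ) = Set.Ioc 0 1 ∪ Set.Ioi 1 from
    (Set.Ioc_union_Ioi_eq_Ioi zero_le_one).symm]
  apply IntegrableOn.union
  · -- on Ioc 0 1, bound by M * t ^ (-s)
    have hbound : IntegrableOn (fun t : ℝ => M * t ^ (-s)) (Set.Ioc 0 1) := by
      refine Integrable.const_mul ?_ M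
      have : IntegrableOn (fun t : ℝ => t ^ (-s)) (Set.Ioc 0 1) := by
        rw [integrableOn_Ioc_iff_integrableOn_Ioo]
        exact (intervalIntegral.integrableOn_Ioo_rpow_iff one_pos).2 (by linarith)
      exact this
    refine Integrable.mono' hbound (hmeas _ measurableSet_Ioc Set.Ioc_subset_Ioi_self) ?_
    refine (ae_restrict_iff' measurableSet_Ioc).2 (Filter.Eventually.of_forall ?_)
    intro t ht
    have ht0 : 0 < t := ht.1
    have h1 : 0 ≤ g t * t ^ (-1 - s) :=
      mul_nonneg (hg0 t ht0) (Real.rpow_nonneg ht0.le _)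
    rw [Real.norm_eq_abs, abs_of_nonneg h1]
    calc g t * t ^ (-1 - s) ≤ (M * t) * t ^ (-1 - s) := by
          exact mul_le_mul_of_nonneg_right (hgt t ht) (Real.rpow_nonneg ht0.le _)
      _ = M * (t ^ (1:ℝ) * t ^ (-1 - s)) := by rw [Real.rpow_one]; ring
      _ = M * t ^ (-s) := by
          have h2 : (1:ℝ) + (-1 - s) = -s := by ring
          rw [← Real.rpow_add ht0, h2]
  · -- on Ioi 1, bound by t ^ (-1-s)
    have hbound : IntegrableOn (fun t : ℝ => t ^ (-1 - s)) (Set.Ioi 1) :=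
      integrableOn_Ioi_rpow_of_lt (by linarith) one_pos
    refine Integrable.mono' hbound (hmeas _ measurableSet_Ioi
      (fun t ht => Set.mem_Ioi.2 (lt_trans one_pos (Set.mem_Ioi.1 ht)))) ?_
    refine (ae_restrict_iff' measurableSet_Ioi).2 (Filter.Eventually.of_forall ?_)
    intro t ht
    have ht0 : (0:ℝ) < t := lt_trans one_pos ht
    have h1 : 0 ≤ g t * t ^ (-1 - s) :=
      mul_nonneg (hg0 t ht0) (Real.rpow_nonneg ht0.le _)
    rw [Real.norm_eq_abs, abs_of_nonneg h1]
    calc g t * t ^ (-1 - s) ≤ 1 * t ^ (-1 - s) :=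
          mul_le_mul_of_nonneg_right (hg1 t ht) (Real.rpow_nonneg ht0.le _)
      _ = t ^ (-1 - s) := one_mul _

lemma aux_lipschitz {f f' : ℝ → ℝ}
    (hderiv : ∀ t ∈ Set.Icc (0:ℝ) 1, HasDerivWithinAt f (f' t) (Set.Icc (0:ℝ) 1) t)
    (hcont : ContinuousOn f' (Set.Icc (0:ℝ) 1)) :
    ∃ M, 0 ≤ M ∧ ∀ t ∈ Set.Icc (0:ℝ) 1, |f t - f 0| ≤ M * t := by
  obtain ⟨C, hC⟩ := (isCompact_Icc).exists_bound_of_continuousOn hcont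
  refine ⟨max C 0, le_max_right _ _, fun t ht => ?_⟩
  have := (convex_Icc (0:ℝ) 1).norm_image_sub_le_of_norm_hasDerivWithin_le (C := max C 0) hderiv
    (fun x hx => le_trans (hC x hx) (le_max_left _ _))
    (Set.left_mem_Icc.2 zero_le_one) ht
  simpa [Real.norm_eq_abs, abs_of_nonneg ht.1] using this

section
variable {V : Type*} [DecidableEq V] [Countable V]

lemma aux_hasSum_update (μ : V → ℝ) (p : ℝ → V → V → ℝ)
    (hp_stoch : ∀ t, 0 ≤ t → ∀ x, HasSum (fun y => p t x y * μ y) 1)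
    (x : V) {t : ℝ} (ht : 0 ≤ t) :
    HasSum (fun y => if y = x then 0 else p t x y * μ y) (1 - p t x x * μ x) := by
  have h := (hp_stoch t ht x).update x 0
  have he : Function.update (fun y => p t x y * μ y) x 0
      = fun y => if y = x then 0 else p t x y * μ y := by
    funext y; exact Function.update_apply _ _ _ _
  rw [he] at h
  rw [show (1:ℝ) - p t x x * μ x = 0 - p t x x * μ x + 1 by ring]
  exact h

lemma aux_tonelli (μ : V → ℝ) (hμ : ∀ x, 0 < μ x) (s : ℝ) (p : ℝ → V → V → ℝ)
    (hp_nonneg : ∀ t, 0 ≤ t → ∀ x y, 0 ≤ p t x y)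
    (hp_stoch : ∀ t, 0 ≤ t → ∀ x, HasSum (fun y => p t x y * μ y) 1)
    (hp_cont : ∀ x y, ContinuousOn (fun t => p t x y) (Set.Ici (0 : ℝ)))
    (x : V) :
    ∑' y, ∫⁻ t in Set.Ioi (0:ℝ),
        ENNReal.ofReal ((if y = x then 0 else p t x y * μ y) * t ^ (-1 - s))
      = ∫⁻ t in Set.Ioi (0:ℝ), ENNReal.ofReal ((1 - p t x x * μ x) * t ^ (-1 - s)) := by
  have hmeas : ∀ y : V, AEMeasurable
      (fun t => ENNReal.ofReal ((if y = x then 0 else p t x y * μ y) * t ^ (-1 - s)))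
      (volume.restrict (Set.Ioi (0:ℝ))) := by
    intro y
    by_cases hyx : y = x
    · simp [hyx]
    · simp only [if_neg hyx]
      apply ENNReal.measurable_ofReal.comp_aemeasurable
      apply AEMeasurable.mul
      · apply AEMeasurable.mul
        · exact ContinuousOn.aemeasurable ((hp_cont x y).mono Set.Ioi_subset_Ici_self)
            measurableSet_Ioi
        · exact aemeasurable_const
      · apply ContinuousOn.aemeasurable _ measurableSet_Ioi
        intro t ht'
        exact (Real.continuousAt_rpow_const t _ (Or.inl (ne_of_gt ht'))).continuousWithinAt
  rw [← lintegral_tsum hmeas]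
  apply setLIntegral_congr_fun measurableSet_Ioi
  intro t ht
  have hupd := aux_hasSum_update μ p hp_stoch x (le_of_lt ht)
  have hsum2 := hupd.mul_right (t ^ (-1 - s))
  beta_reduce
  rw [← hsum2.tsum_eq]
  rw [ENNReal.ofReal_tsum_of_nonneg _ hsum2.summable]
  intro y
  apply mul_nonneg _ (Real.rpow_nonneg ht.le _)
  by_cases hyx : y = x
  · simp [hyx]
  · simp only [if_neg hyx]
    exact mul_nonneg (hp_nonneg t ht.le x y) (hμ y).le

end

section
variable {V : Type*} [DecidableEq V] [Countable V]

lemma aux_pmu_le_one (μ : V → ℝ) (hμ : ∀ x, 0 < μ x) (p : ℝ → V → V → ℝ)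
    (hp_nonneg : ∀ t, 0 ≤ t → ∀ x y, 0 ≤ p t x y)
    (hp_stoch : ∀ t, 0 ≤ t → ∀ x, HasSum (fun y => p t x y * μ y) 1)
    {t : ℝ} (ht : 0 ≤ t) (x y : V) : p t x y * μ y ≤ 1 :=
  le_hasSum (hp_stoch t ht x) y
    (fun j _ => mul_nonneg (hp_nonneg t ht x j) (hμ j).le)

lemma aux_phi_integrable (μ : V → ℝ) (hμ : ∀ x, 0 < μ x)
    {s : ℝ} (hs0 : 0 < s) (hs1 : s < 1) (p : ℝ → V → V → ℝ) (p' : V → ℝ → ℝ)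
    (hp_nonneg : ∀ t, 0 ≤ t → ∀ x y, 0 ≤ p t x y)
    (hp_stoch : ∀ t, 0 ≤ t → ∀ x, HasSum (fun y => p t x y * μ y) 1)
    (hp_zero : ∀ x y : V, p 0 x y = if y = x then 1 / μ x else 0)
    (hp_cont : ∀ x y, ContinuousOn (fun t => p t x y) (Set.Ici (0 : ℝ)))
    (hp_deriv : ∀ x, ∀ t ∈ Set.Icc (0 : ℝ) 1,
      HasDerivWithinAt (fun τ => p τ x x) (p' x t) (Set.Icc (0 : ℝ) 1) t)
    (hp'_cont : ∀ x, ContinuousOn (p' x) (Set.Icc (0 : ℝ) 1)) (x : V) :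
    IntegrableOn (fun t => (1 - p t x x * μ x) * t ^ (-1 - s)) (Set.Ioi (0:ℝ)) := by
  obtain ⟨M', hM'0, hM'⟩ := aux_lipschitz (hp_deriv x) (hp'_cont x)
  apply aux_integrable_pow hs0 hs1 (M := μ x * M') (mul_nonneg (hμ x).le hM'0)
  · exact continuousOn_const.sub ((hp_cont x x).mul continuousOn_const)
  · intro t ht
    have := aux_pmu_le_one μ hμ p hp_nonneg hp_stoch ht.le x x
    linarith
  · intro t ht
    have := mul_nonneg (hp_nonneg t (by linarith) x x) (hμ x).le
    linarith
  · intro t ht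
    have h0 : p 0 x x = 1 / μ x := by rw [hp_zero x x, if_pos rfl]
    have hle := hM' t ⟨ht.1.le, ht.2⟩
    have h2 : p 0 x x - p t x x ≤ M' * t := by
      have := abs_le.1 hle
      linarith [this.1, this.2, abs_le.1 hle]
    calc 1 - p t x x * μ x = μ x * (p 0 x x - p t x x) := by
          have : μ x * (1 / μ x) = 1 := by rw [mul_one_div, div_self (hμ x).ne']
          rw [h0, mul_sub, this, mul_comm]
      _ ≤ μ x * (M' * t) := by
          apply mul_le_mul_of_nonneg_left h2 (hμ x).le
      _ = μ x * M' * t := by ring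

end

lemma aux_lintegral_lt_top {f : ℝ → ℝ} {S : Set ℝ} (hf : MeasureTheory.IntegrableOn f S) :
    ∫⁻ t in S, ENNReal.ofReal (f t) < ⊤ := by
  refine lt_of_le_of_lt (MeasureTheory.lintegral_mono fun t => ?_) hf.2
  rw [← ofReal_norm]
  exact ENNReal.ofReal_le_ofReal (le_abs_self _)

section
variable {V : Type*} [DecidableEq V] [Countable V]

lemma aux_J_lt_top (μ : V → ℝ) (hμ : ∀ x, 0 < μ x)
    {s : ℝ} (hs0 : 0 < s) (hs1 : s < 1) (p : ℝ → V → V → ℝ) (p' : V → ℝ → ℝ)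
    (hp_nonneg : ∀ t, 0 ≤ t → ∀ x y, 0 ≤ p t x y)
    (hp_stoch : ∀ t, 0 ≤ t → ∀ x, HasSum (fun y => p t x y * μ y) 1)
    (hp_zero : ∀ x y : V, p 0 x y = if y = x then 1 / μ x else 0)
    (hp_cont : ∀ x y, ContinuousOn (fun t => p t x y) (Set.Ici (0 : ℝ)))
    (hp_deriv : ∀ x, ∀ t ∈ Set.Icc (0 : ℝ) 1,
      HasDerivWithinAt (fun τ => p τ x x) (p' x t) (Set.Icc (0 : ℝ) 1) t)
    (hp'_cont : ∀ x, ContinuousOn (p' x) (Set.Icc (0 : ℝ) 1)) (x : V) :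
    ∑' y, ∫⁻ t in Set.Ioi (0:ℝ),
        ENNReal.ofReal ((if y = x then 0 else p t x y * μ y) * t ^ (-1 - s)) < ⊤ := by
  rw [aux_tonelli μ hμ s p hp_nonneg hp_stoch hp_cont x]
  exact aux_lintegral_lt_top (aux_phi_integrable μ hμ hs0 hs1 p p' hp_nonneg hp_stoch
    hp_zero hp_cont hp_deriv hp'_cont x)

lemma aux_y_integrable (μ : V → ℝ) (hμ : ∀ x, 0 < μ x)
    {s : ℝ} (hs0 : 0 < s) (hs1 : s < 1) (p : ℝ → V → V → ℝ) (p' : V → ℝ → ℝ)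
    (hp_nonneg : ∀ t, 0 ≤ t → ∀ x y, 0 ≤ p t x y)
    (hp_stoch : ∀ t, 0 ≤ t → ∀ x, HasSum (fun y => p t x y * μ y) 1)
    (hp_zero : ∀ x y : V, p 0 x y = if y = x then 1 / μ x else 0)
    (hp_cont : ∀ x y, ContinuousOn (fun t => p t x y) (Set.Ici (0 : ℝ)))
    (hp_deriv : ∀ x, ∀ t ∈ Set.Icc (0 : ℝ) 1,
      HasDerivWithinAt (fun τ => p τ x x) (p' x t) (Set.Icc (0 : ℝ) 1) t)
    (hp'_cont : ∀ x, ContinuousOn (p' x) (Set.Icc (0 : ℝ) 1)) (x y : V) (hyx : y ≠ x) :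
    IntegrableOn (fun t => p t x y * μ y * t ^ (-1 - s)) (Set.Ioi (0:ℝ)) ∧
    ∫ t in Set.Ioi (0:ℝ), p t x y * μ y * t ^ (-1 - s)
      = (∫⁻ t in Set.Ioi (0:ℝ),
          ENNReal.ofReal ((if y = x then 0 else p t x y * μ y) * t ^ (-1 - s))).toReal := by
  have hJlt : ∫⁻ t in Set.Ioi (0:ℝ),
      ENNReal.ofReal ((if y = x then 0 else p t x y * μ y) * t ^ (-1 - s)) < ⊤ :=
    lt_of_le_of_lt (ENNReal.le_tsum y)
      (aux_J_lt_top μ hμ hs0 hs1 p p' hp_nonneg hp_stoch hp_zero hp_cont hp_deriv hp'_cont x)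
  have hJeq : ∫⁻ t in Set.Ioi (0:ℝ),
      ENNReal.ofReal ((if y = x then 0 else p t x y * μ y) * t ^ (-1 - s))
      = ∫⁻ t in Set.Ioi (0:ℝ), ENNReal.ofReal (p t x y * μ y * t ^ (-1 - s)) := by
    simp only [if_neg hyx]
  have haesm : AEStronglyMeasurable (fun t => p t x y * μ y * t ^ (-1 - s))
      (volume.restrict (Set.Ioi (0:ℝ))) := by
    apply ContinuousOn.aestronglyMeasurable _ measurableSet_Ioi
    apply ContinuousOn.mul
    · exact ((hp_cont x y).mono Set.Ioi_subset_Ici_self).mul continuousOn_const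
    · intro t ht'
      exact (Real.continuousAt_rpow_const t _ (Or.inl (ne_of_gt ht'))).continuousWithinAt
  have hnn : 0 ≤ᵐ[volume.restrict (Set.Ioi (0:ℝ))] fun t => p t x y * μ y * t ^ (-1 - s) := by
    refine (ae_restrict_iff' measurableSet_Ioi).2 (Filter.Eventually.of_forall fun t ht => ?_)
    exact mul_nonneg (mul_nonneg (hp_nonneg t ht.le x y) (hμ y).le)
      (Real.rpow_nonneg ht.le _)
  have hint : IntegrableOn (fun t => p t x y * μ y * t ^ (-1 - s)) (Set.Ioi (0:ℝ)) := by
    refine ⟨haesm, ?_⟩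
    rw [hasFiniteIntegral_iff_ofReal hnn]
    rw [hJeq] at hJlt
    exact hJlt
  refine ⟨hint, ?_⟩
  rw [MeasureTheory.integral_eq_lintegral_of_nonneg_ae hnn haesm, hJeq]

lemma aux_Wker_eq (μ : V → ℝ) (hμ : ∀ x, 0 < μ x)
    {s : ℝ} (hs0 : 0 < s) (hs1 : s < 1) (p : ℝ → V → V → ℝ) (p' : V → ℝ → ℝ)
    (hp_nonneg : ∀ t, 0 ≤ t → ∀ x y, 0 ≤ p t x y)
    (hp_stoch : ∀ t, 0 ≤ t → ∀ x, HasSum (fun y => p t x y * μ y) 1)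
    (hp_zero : ∀ x y : V, p 0 x y = if y = x then 1 / μ x else 0)
    (hp_cont : ∀ x y, ContinuousOn (fun t => p t x y) (Set.Ici (0 : ℝ)))
    (hp_deriv : ∀ x, ∀ t ∈ Set.Icc (0 : ℝ) 1,
      HasDerivWithinAt (fun τ => p τ x x) (p' x t) (Set.Icc (0 : ℝ) 1) t)
    (hp'_cont : ∀ x, ContinuousOn (p' x) (Set.Icc (0 : ℝ) 1)) (x y : V) :
    Wker μ s p x y = (s / Real.Gamma (1 - s)) * μ x *
      ((∫⁻ t in Set.Ioi (0:ℝ),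
        ENNReal.ofReal ((if y = x then 0 else p t x y * μ y) * t ^ (-1 - s))).toReal) := by
  by_cases hyx : y = x
  · simp [Wker, hyx]
  · rw [Wker, if_neg hyx]
    have : ∫ t in Set.Ioi (0:ℝ), p t x y * μ y * t ^ (-1 - s)
        = μ y * ∫ t in Set.Ioi (0:ℝ), p t x y * t ^ (-1 - s) := by
      rw [← MeasureTheory.integral_const_mul]
      congr 1; funext t; ring
    rw [← (aux_y_integrable μ hμ hs0 hs1 p p' hp_nonneg hp_stoch hp_zero hp_cont hp_deriv
      hp'_cont x y hyx).2, this]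
    ring

end
end AuxLemmas

/-- For every bounded `u : V → ℝ` and every `x ∈ V`, the integral
`(s/Γ(1−s)) ∫_0^∞ (u(x) − Σ_y p(t,x,y) u(y) μ(y)) t^{−1−s} dt` converges and equals
`(1/μ(x)) Σ_{y ≠ x} W_s(x,y)(u(x) − u(y))`; moreover `W_s(x,y) = W_s(y,x) ≥ 0` for `x ≠ y`,
and `Σ_{y ≠ x} W_s(x,y) < +∞` for every `x`. -/
theorem fractional_laplacian_discrete_representation
    {V : Type*} [DecidableEq V] [Countable V] [Infinite V]
    (μ : V → ℝ) (hμ : ∀ x, 0 < μ x)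
    (s : ℝ) (hs0 : 0 < s) (hs1 : s < 1)
    (p : ℝ → V → V → ℝ) (p' : V → ℝ → ℝ)
    (hp_nonneg : ∀ t, 0 ≤ t → ∀ x y, 0 ≤ p t x y)
    (hp_symm : ∀ t x y, p t x y = p t y x)
    (hp_stoch : ∀ t, 0 ≤ t → ∀ x, HasSum (fun y => p t x y * μ y) 1)
    (hp_zero : ∀ x y : V, p 0 x y = if y = x then 1 / μ x else 0)
    (hp_cont : ∀ x y, ContinuousOn (fun t => p t x y) (Set.Ici (0 : ℝ)))
    (hp_deriv : ∀ x, ∀ t ∈ Set.Icc (0 : ℝ) 1,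
      HasDerivWithinAt (fun τ => p τ x x) (p' x t) (Set.Icc (0 : ℝ) 1) t)
    (hp'_cont : ∀ x, ContinuousOn (p' x) (Set.Icc (0 : ℝ) 1)) :
    (∀ u : V → ℝ, (∃ C, ∀ x, |u x| ≤ C) → ∀ x : V,
      IntegrableOn
        (fun t => (u x - ∑' y, p t x y * u y * μ y) * t ^ (-1 - s)) (Set.Ioi (0 : ℝ)) ∧
      (s / Real.Gamma (1 - s)) *
          ∫ t in Set.Ioi (0 : ℝ), (u x - ∑' y, p t x y * u y * μ y) * t ^ (-1 - s)
        = (1 / μ x) * ∑' y, Wker μ s p x y * (u x - u y)) ∧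
    (∀ x y : V, x ≠ y → Wker μ s p x y = Wker μ s p y x ∧ 0 ≤ Wker μ s p x y) ∧
    (∀ x : V, Summable fun y => Wker μ s p x y) := by
  have hΓ : 0 < Real.Gamma (1 - s) := Real.Gamma_pos_of_pos (by linarith)
  have hc0 : 0 ≤ s / Real.Gamma (1 - s) := div_nonneg hs0.le hΓ.le
  have hpow_cont : ContinuousOn (fun t : ℝ => t ^ (-1 - s)) (Set.Ioi 0) := fun t ht =>
    (Real.continuousAt_rpow_const t _ (Or.inl (ne_of_gt ht))).continuousWithinAt
  refine ⟨?_, ?_, ?_⟩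
  · -- main statement
    intro u hCex x
    obtain ⟨C, hCb⟩ := hCex
    have hC0 : 0 ≤ C := le_trans (abs_nonneg _) (hCb x)
    -- summability of the series in the integrand
    have hsumS : ∀ t : ℝ, 0 ≤ t → Summable (fun y => p t x y * u y * μ y) := by
      intro t ht
      apply Summable.of_norm_bounded (g := fun y => C * (p t x y * μ y))
        (((hp_stoch t ht x).summable).mul_left C)
      intro y
      have h1 : 0 ≤ p t x y := hp_nonneg t ht x y
      rw [Real.norm_eq_abs, abs_mul, abs_mul, abs_of_nonneg h1, abs_of_nonneg (hμ y).le]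
      calc p t x y * |u y| * μ y ≤ p t x y * C * μ y := by
            apply mul_le_mul_of_nonneg_right _ (hμ y).le
            exact mul_le_mul_of_nonneg_left (hCb y) h1
        _ = C * (p t x y * μ y) := by ring
    have hFsum : ∀ t : ℝ, 0 ≤ t →
        HasSum (fun y => if y = x then 0 else p t x y * (u x - u y) * μ y)
          (u x - ∑' y, p t x y * u y * μ y) := by
      intro t ht
      have h1 : HasSum (fun y => p t x y * μ y * u x) (u x) := by
        simpa using (hp_stoch t ht x).mul_right (u x)
      have h2 : HasSum (fun y => p t x y * u y * μ y) (∑' y, p t x y * u y * μ y) :=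
        (hsumS t ht).hasSum
      have h3 := h1.sub h2
      have heq : (fun y => if y = x then 0 else p t x y * (u x - u y) * μ y)
          = fun y => p t x y * μ y * u x - p t x y * u y * μ y := by
        funext y
        by_cases hyx : y = x
        · subst hyx; rw [if_pos rfl]; ring
        · rw [if_neg hyx]; ring
      rw [heq]
      exact h3
    -- measurability of the series
    have : Encodable V := Encodable.ofCountable V
    have : Denumerable V := Denumerable.ofEncodableOfInfinite V
    let e : V ≃ ℕ := Denumerable.eqv V
    have hSmeas : AEStronglyMeasurable (fun t => ∑' y, p t x y * u y * μ y)
        (volume.restrict (Set.Ioi (0:ℝ))) := by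
      apply aestronglyMeasurable_of_tendsto_ae (atTop : Filter ℕ)
        (f := fun n t => ∑ i ∈ Finset.range n,
          p t x (e.symm i) * u (e.symm i) * μ (e.symm i))
      · intro n
        apply Finset.aestronglyMeasurable_fun_sum
        intro i _
        exact (((hp_cont x (e.symm i)).mono Set.Ioi_subset_Ici_self).mul
          continuousOn_const).aestronglyMeasurable measurableSet_Ioi |>.mul_const _
      · refine (ae_restrict_iff' measurableSet_Ioi).2 (Filter.Eventually.of_forall
          fun t ht => ?_)
        have hs2 := (hsumS t (le_of_lt ht)).hasSum
        have hs3 := (e.symm.hasSum_iff).2 hs2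
        exact hs3.tendsto_sum_nat
    have hmainmeas : AEStronglyMeasurable
        (fun t => (u x - ∑' y, p t x y * u y * μ y) * t ^ (-1 - s))
        (volume.restrict (Set.Ioi (0:ℝ))) :=
      (aestronglyMeasurable_const.sub hSmeas).mul
        (hpow_cont.aestronglyMeasurable measurableSet_Ioi)
    -- termwise bound
    have hterm : ∀ (t : ℝ), 0 ≤ t → ∀ y, ‖if y = x then 0 else p t x y * (u x - u y) * μ y‖
        ≤ 2 * C * (if y = x then 0 else p t x y * μ y) := by
      intro t ht y
      by_cases hyx : y = x
      · simp [hyx]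
      · rw [if_neg hyx, if_neg hyx, Real.norm_eq_abs, abs_mul, abs_mul,
          abs_of_nonneg (hp_nonneg t ht x y), abs_of_nonneg (hμ y).le]
        have h2C : |u x - u y| ≤ 2 * C := by
          calc |u x - u y| ≤ |u x| + |u y| := abs_sub _ _
            _ ≤ C + C := add_le_add (hCb x) (hCb y)
            _ = 2 * C := by ring
        calc p t x y * |u x - u y| * μ y ≤ p t x y * (2 * C) * μ y := by
              apply mul_le_mul_of_nonneg_right _ (hμ y).le
              exact mul_le_mul_of_nonneg_left h2C (hp_nonneg t ht x y)
          _ = 2 * C * (p t x y * μ y) := by ring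
    -- pointwise bound
    have hbound : ∀ t : ℝ, 0 < t →
        ‖(u x - ∑' y, p t x y * u y * μ y) * t ^ (-1 - s)‖
          ≤ (2 * C) * ((1 - p t x x * μ x) * t ^ (-1 - s)) := by
      intro t ht
      have hupd := aux_hasSum_update μ p hp_stoch x ht.le
      have hsumnorm : Summable (fun y => ‖if y = x then 0 else p t x y * (u x - u y) * μ y‖) := by
        apply Summable.of_nonneg_of_le (fun y => norm_nonneg _) (hterm t ht.le)
        exact hupd.summable.mul_left (2 * C)
      have habs : |u x - ∑' y, p t x y * u y * μ y|
          ≤ 2 * C * (1 - p t x x * μ x) := by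
        rw [← (hFsum t ht.le).tsum_eq]
        calc |∑' y, if y = x then 0 else p t x y * (u x - u y) * μ y|
            ≤ ∑' y, ‖if y = x then 0 else p t x y * (u x - u y) * μ y‖ :=
              norm_tsum_le_tsum_norm hsumnorm
          _ ≤ ∑' y, 2 * C * (if y = x then 0 else p t x y * μ y) :=
              Summable.tsum_le_tsum (hterm t ht.le) hsumnorm (hupd.summable.mul_left _)
          _ = 2 * C * (1 - p t x x * μ x) := (hupd.mul_left (2 * C)).tsum_eq
      rw [norm_mul, Real.norm_eq_abs, Real.norm_eq_abs,
        abs_of_nonneg (Real.rpow_nonneg ht.le _)]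
      calc |u x - ∑' y, p t x y * u y * μ y| * t ^ (-1 - s)
          ≤ (2 * C * (1 - p t x x * μ x)) * t ^ (-1 - s) :=
            mul_le_mul_of_nonneg_right habs (Real.rpow_nonneg ht.le _)
        _ = 2 * C * ((1 - p t x x * μ x) * t ^ (-1 - s)) := by ring
    -- integrability
    have hphi := aux_phi_integrable μ hμ hs0 hs1 p p' hp_nonneg hp_stoch hp_zero hp_cont
      hp_deriv hp'_cont x
    have hInt : IntegrableOn
        (fun t => (u x - ∑' y, p t x y * u y * μ y) * t ^ (-1 - s)) (Set.Ioi (0:ℝ)) := by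
      refine Integrable.mono' (hphi.const_mul (2 * C)) hmainmeas ?_
      refine (ae_restrict_iff' measurableSet_Ioi).2 (Filter.Eventually.of_forall
        fun t ht => hbound t ht)
    refine ⟨hInt, ?_⟩
    -- the integral identity
    have hinteq1 : ∫ t in Set.Ioi (0:ℝ), (u x - ∑' y, p t x y * u y * μ y) * t ^ (-1 - s)
        = ∫ t in Set.Ioi (0:ℝ),
            ∑' y, (if y = x then 0 else p t x y * (u x - u y) * μ y) * t ^ (-1 - s) := by
      apply setIntegral_congr_fun measurableSet_Ioi
      intro t ht
      show (u x - ∑' y, p t x y * u y * μ y) * t ^ (-1 - s)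
        = ∑' y, (if y = x then 0 else p t x y * (u x - u y) * μ y) * t ^ (-1 - s)
      rw [← (hFsum t (le_of_lt ht)).tsum_eq, tsum_mul_right]
    have hfmeas : ∀ y : V, AEStronglyMeasurable
        (fun t => (if y = x then 0 else p t x y * (u x - u y) * μ y) * t ^ (-1 - s))
        (volume.restrict (Set.Ioi (0:ℝ))) := by
      intro y
      by_cases hyx : y = x
      · simp only [if_pos hyx, zero_mul]
        exact aestronglyMeasurable_const
      · simp only [if_neg hyx]
        exact ((((hp_cont x y).mono Set.Ioi_subset_Ici_self).mul
          continuousOn_const).mul continuousOn_const).mul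
          (hpow_cont.mono (by rfl)) |>.aestronglyMeasurable measurableSet_Ioi
    have hftop : ∑' y, ∫⁻ t in Set.Ioi (0:ℝ),
        ‖(if y = x then 0 else p t x y * (u x - u y) * μ y) * t ^ (-1 - s)‖₊ ≠ ⊤ := by
      have hb : ∀ y : V, ∫⁻ t in Set.Ioi (0:ℝ),
          ‖(if y = x then 0 else p t x y * (u x - u y) * μ y) * t ^ (-1 - s)‖₊
          ≤ ENNReal.ofReal (2 * C) * ∫⁻ t in Set.Ioi (0:ℝ),
            ENNReal.ofReal ((if y = x then 0 else p t x y * μ y) * t ^ (-1 - s)) := by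
        intro y
        rw [← MeasureTheory.lintegral_const_mul' _ _ ENNReal.ofReal_ne_top]
        apply MeasureTheory.lintegral_mono_ae
        refine (ae_restrict_iff' measurableSet_Ioi).2 (Filter.Eventually.of_forall
          fun t ht => ?_)
        rw [← enorm_eq_nnnorm, ← ofReal_norm, ← ENNReal.ofReal_mul (by linarith)]
        apply ENNReal.ofReal_le_ofReal
        rw [norm_mul, Real.norm_eq_abs (t ^ (-1 - s)),
          abs_of_nonneg (Real.rpow_nonneg ht.le _)]
        calc ‖if y = x then 0 else p t x y * (u x - u y) * μ y‖ * t ^ (-1 - s)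
            ≤ (2 * C * (if y = x then 0 else p t x y * μ y)) * t ^ (-1 - s) :=
              mul_le_mul_of_nonneg_right (hterm t ht.le y) (Real.rpow_nonneg ht.le _)
          _ = 2 * C * ((if y = x then 0 else p t x y * μ y) * t ^ (-1 - s)) := by ring
      have h2 := ENNReal.tsum_le_tsum hb
      rw [ENNReal.tsum_mul_left] at h2
      exact ne_top_of_le_ne_top (ENNReal.mul_ne_top ENNReal.ofReal_ne_top
        (aux_J_lt_top μ hμ hs0 hs1 p p' hp_nonneg hp_stoch hp_zero hp_cont hp_deriv
          hp'_cont x).ne) h2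
    rw [hinteq1, MeasureTheory.integral_tsum hfmeas hftop, ← tsum_mul_left, ← tsum_mul_left]
    apply tsum_congr
    intro y
    by_cases hyx : y = x
    · have hz : (fun t : ℝ => (if y = x then (0:ℝ) else p t x y * (u x - u y) * μ y)
          * t ^ (-1 - s)) = fun _ => (0:ℝ) := by
        funext t; rw [if_pos hyx, zero_mul]
      rw [hz]
      simp [Wker, hyx]
    · rw [Wker, if_neg hyx]
      have h1 : ∫ t in Set.Ioi (0:ℝ),
          (if y = x then 0 else p t x y * (u x - u y) * μ y) * t ^ (-1 - s)
          = ((u x - u y) * μ y) * ∫ t in Set.Ioi (0:ℝ), p t x y * t ^ (-1 - s) := by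
        rw [← MeasureTheory.integral_const_mul]
        apply setIntegral_congr_fun measurableSet_Ioi
        intro t ht
        show (if y = x then (0:ℝ) else p t x y * (u x - u y) * μ y) * t ^ (-1 - s) = _
        rw [if_neg hyx]; ring
      rw [h1]
      have hμx := (hμ x).ne'
      field_simp
  · -- symmetry and nonnegativity
    intro x y hxy
    constructor
    · rw [Wker, Wker, if_neg (Ne.symm hxy), if_neg hxy]
      have : (fun t => p t x y * t ^ (-1 - s)) = fun t => p t y x * t ^ (-1 - s) := by
        funext t; rw [hp_symm t x y]
      rw [this]
      ring
    · rw [Wker, if_neg (Ne.symm hxy)]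
      apply mul_nonneg (mul_nonneg (mul_nonneg hc0 (hμ x).le) (hμ y).le)
      apply setIntegral_nonneg measurableSet_Ioi
      intro t ht
      exact mul_nonneg (hp_nonneg t (le_of_lt ht) x y) (Real.rpow_nonneg (le_of_lt ht) _)
  · -- summability
    intro x
    have heq : (fun y => Wker μ s p x y) = fun y => (s / Real.Gamma (1 - s)) * μ x *
        ((∫⁻ t in Set.Ioi (0:ℝ),
          ENNReal.ofReal ((if y = x then 0 else p t x y * μ y) * t ^ (-1 - s))).toReal) :=
      funext (aux_Wker_eq μ hμ hs0 hs1 p p' hp_nonneg hp_stoch hp_zero hp_cont hp_deriv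
        hp'_cont x)
    rw [heq]
    exact (ENNReal.summable_toReal
      (aux_J_lt_top μ hμ hs0 hs1 p p' hp_nonneg hp_stoch hp_zero hp_cont hp_deriv
        hp'_cont x).ne).mul_left _
end

section
/- For every fixed x ∈ V one has Σ_{y∈V, y≠x} W_s(x,y) ≤ C_{x,s}, where C_{x,s} = (μ(x)/((1−s)Γ(1−s))) · max{ μ(x) · max_{t∈[0,1]} |∂_t p(t,x,x)| , 1 }. -/
open Filter Topology MeasureTheory

/-- For every fixed `x ∈ V`, `Σ_{y ≠ x} W_s(x,y) ≤ C_{x,s}` where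
`C_{x,s} = (μ(x)/((1−s)Γ(1−s))) · max{ μ(x) · max_{t∈[0,1]} |∂_t p(t,x,x)| , 1 }`. -/
theorem kernel_sum_upper_bound
    {V : Type*} [DecidableEq V] [Countable V] [Infinite V]
    (μ : V → ℝ) (hμ : ∀ x, 0 < μ x)
    (s : ℝ) (hs0 : 0 < s) (hs1 : s < 1)
    (p : ℝ → V → V → ℝ) (p' : V → ℝ → ℝ)
    (hp_nonneg : ∀ t, 0 ≤ t → ∀ x y, 0 ≤ p t x y)
    (hp_symm : ∀ t x y, p t x y = p t y x)
    (hp_stoch : ∀ t, 0 ≤ t → ∀ x, HasSum (fun y => p t x y * μ y) 1)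
    (hp_zero : ∀ x y : V, p 0 x y = if y = x then 1 / μ x else 0)
    (hp_cont : ∀ x y, ContinuousOn (fun t => p t x y) (Set.Ici (0 : ℝ)))
    (hp_deriv : ∀ x, ∀ t ∈ Set.Icc (0 : ℝ) 1,
      HasDerivWithinAt (fun τ => p τ x x) (p' x t) (Set.Icc (0 : ℝ) 1) t)
    (hp'_cont : ∀ x, ContinuousOn (p' x) (Set.Icc (0 : ℝ) 1)) :
    ∀ x : V,
      ∑' y, Wker μ s p x y ≤
        (μ x / ((1 - s) * Real.Gamma (1 - s))) *
          max (μ x * sSup ((fun t => |p' x t|) '' Set.Icc (0 : ℝ) 1)) 1 := by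
  intro x
  set M : ℝ := sSup ((fun t => |p' x t|) '' Set.Icc (0 : ℝ) 1) with hMdef
  have hΓ : 0 < Real.Gamma (1 - s) := Real.Gamma_pos_of_pos (by linarith)
  have h1s : (0:ℝ) < 1 - s := by linarith
  -- facts about M
  have hbdd : BddAbove ((fun t => |p' x t|) '' Set.Icc (0 : ℝ) 1) :=
    (isCompact_Icc.image_of_continuousOn ((hp'_cont x).abs)).bddAbove
  have hMle : ∀ t ∈ Set.Icc (0:ℝ) 1, |p' x t| ≤ M := fun t ht => le_csSup hbdd ⟨t, ht, rfl⟩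
  have hM0 : 0 ≤ M := le_trans (abs_nonneg _) (hMle 0 ⟨le_refl _, zero_le_one⟩)
  set K : ℝ := max (μ x * M) 1 with hKdef
  have hK1 : (1:ℝ) ≤ K := le_max_right _ _
  have hK2 : μ x * M ≤ K := le_max_left _ _
  have hC0 : 0 ≤ (μ x / ((1 - s) * Real.Gamma (1 - s))) * K :=
    mul_nonneg (div_nonneg (hμ x).le (by positivity)) (by linarith)
  -- MVT bound
  have hmvt : ∀ t ∈ Set.Icc (0:ℝ) 1, 1 - p t x x * μ x ≤ μ x * M * t := by
    intro t ht
    have h1 : ‖p t x x - p 0 x x‖ ≤ M * ‖t - 0‖ :=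
      (convex_Icc (0:ℝ) 1).norm_image_sub_le_of_norm_hasDerivWithin_le
        (hp_deriv x) (fun τ hτ => hMle τ hτ) (Set.left_mem_Icc.mpr zero_le_one) ht
    have hp00 : p 0 x x = 1 / μ x := by simpa using hp_zero x x
    rw [Real.norm_eq_abs, Real.norm_eq_abs, sub_zero, abs_of_nonneg ht.1] at h1
    have h2 : p 0 x x - p t x x ≤ M * t := le_trans (le_abs_self _) (by rwa [abs_sub_comm] at h1)
    have h3 : (p 0 x x - p t x x) * μ x ≤ M * t * μ x :=
      mul_le_mul_of_nonneg_right h2 (hμ x).le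
    have h4 : p 0 x x * μ x = 1 := by rw [hp00]; exact one_div_mul_cancel (ne_of_gt (hμ x))
    nlinarith [hμ x]
  -- partial sum bound
  have hsum_le : ∀ t, 0 ≤ t → ∀ F : Finset V, x ∉ F →
      ∑ y ∈ F, p t x y * μ y ≤ 1 - p t x x * μ x := by
    intro t ht F hxF
    have h := sum_le_hasSum (insert x F)
      (fun y _ => mul_nonneg (hp_nonneg t ht x y) (hμ y).le) (hp_stoch t ht x)
    rw [Finset.sum_insert hxF] at h
    linarith
  -- dominating function
  set g : ℝ → ℝ := fun t => if t ≤ 1 then μ x * M * t else 1 with hgdef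
  set h : ℝ → ℝ := fun t => g t * t ^ (-1 - s) with hhdef
  have hg_bound : ∀ t, 0 < t → ∀ F : Finset V, x ∉ F →
      ∑ y ∈ F, p t x y * μ y ≤ g t := by
    intro t ht F hxF
    have h1 := hsum_le t ht.le F hxF
    by_cases h2 : t ≤ 1
    · simp only [hgdef, if_pos h2]
      exact h1.trans (hmvt t ⟨ht.le, h2⟩)
    · simp only [hgdef, if_neg h2]
      have := mul_nonneg (hp_nonneg t ht.le x x) (hμ x).le
      linarith
  -- integrability of h on the two pieces
  have hint1 : IntegrableOn (fun t : ℝ => μ x * M * t ^ (-s)) (Set.Ioc 0 1) := by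
    have := (intervalIntegral.intervalIntegrable_rpow' (r := -s) (by linarith)
      (a := 0) (b := 1))
    rw [intervalIntegrable_iff, Set.uIoc_of_le zero_le_one] at this
    exact this.const_mul _
  have hint2 : IntegrableOn (fun t : ℝ => t ^ (-1 - s)) (Set.Ioi 1) :=
    integrableOn_Ioi_rpow_of_lt (by linarith) one_pos
  have hEq1 : Set.EqOn h (fun t : ℝ => μ x * M * t ^ (-s)) (Set.Ioc 0 1) := by
    intro t ht
    have hts : t ^ (-s) = t * t ^ (-1 - s) := by
      rw [show (-s) = 1 + (-1 - s) by ring, Real.rpow_add ht.1, Real.rpow_one]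
    simp only [hhdef, hgdef, if_pos ht.2, hts]
    ring
  have hEq2 : Set.EqOn h (fun t : ℝ => t ^ (-1 - s)) (Set.Ioi 1) := by
    intro t ht
    simp only [hhdef, hgdef, if_neg (not_le.mpr (Set.mem_Ioi.mp ht)), one_mul]
  have hIoc : IntegrableOn h (Set.Ioc 0 1) :=
    hint1.congr_fun (fun t ht => (hEq1 ht).symm) measurableSet_Ioc
  have hIoi1 : IntegrableOn h (Set.Ioi 1) :=
    hint2.congr_fun (fun t ht => (hEq2 ht).symm) measurableSet_Ioi
  have hunion : Set.Ioc (0:ℝ) 1 ∪ Set.Ioi 1 = Set.Ioi 0 := Set.Ioc_union_Ioi_eq_Ioi zero_le_one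
  have hInt_h : IntegrableOn h (Set.Ioi 0) := by
    rw [← hunion]; exact hIoc.union hIoi1
  -- value of ∫ h
  have hval1 : ∫ t in Set.Ioc (0:ℝ) 1, t ^ (-s) = 1 / (1 - s) := by
    rw [← intervalIntegral.integral_of_le zero_le_one,
      integral_rpow (Or.inl (by linarith : (-1:ℝ) < -s))]
    rw [Real.one_rpow, Real.zero_rpow (by linarith : -s + 1 ≠ 0)]
    ring_nf
  have hval2 : ∫ t in Set.Ioi (1:ℝ), t ^ (-1 - s) = 1 / s := by
    rw [integral_Ioi_rpow_of_lt (by linarith) one_pos]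
    rw [Real.one_rpow]
    ring_nf
  have hval : ∫ t in Set.Ioi (0:ℝ), h t = μ x * M * (1 / (1 - s)) + 1 / s := by
    rw [← hunion, setIntegral_union (Set.Ioc_disjoint_Ioi le_rfl) measurableSet_Ioi hIoc hIoi1]
    rw [setIntegral_congr_fun measurableSet_Ioc hEq1,
      setIntegral_congr_fun measurableSet_Ioi hEq2,
      integral_const_mul, hval1, hval2]
  -- measurability of the y-terms
  have hmeas : ∀ y : V, AEStronglyMeasurable (fun t => p t x y * t ^ (-1 - s))
      (volume.restrict (Set.Ioi (0:ℝ))) := by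
    intro y
    apply ContinuousOn.aestronglyMeasurable _ measurableSet_Ioi
    exact ((hp_cont x y).mono (Set.Ioi_subset_Ici le_rfl)).mul
      (continuousOn_id.rpow_const (fun t ht => Or.inl (ne_of_gt ht)))
  -- integrability of each y-term
  have hint_y : ∀ y : V, y ≠ x → IntegrableOn (fun t => p t x y * t ^ (-1 - s)) (Set.Ioi 0) := by
    intro y hyx
    apply Integrable.mono' ((hInt_h.const_mul (1 / μ y)))
    · exact hmeas y
    · rw [ae_restrict_iff' measurableSet_Ioi]
      filter_upwards with t ht
      have hp1 : p t x y * μ y ≤ g t := by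
        have := hg_bound t ht {y} (by simp [Ne.symm hyx])
        simpa using this
      have hpy : p t x y ≤ g t / μ y := (le_div_iff₀ (hμ y)).mpr hp1
      rw [Real.norm_eq_abs, abs_of_nonneg (mul_nonneg (hp_nonneg t ht.le x y)
        (Real.rpow_nonneg ht.le _))]
      calc p t x y * t ^ (-1 - s) ≤ (g t / μ y) * t ^ (-1 - s) :=
            mul_le_mul_of_nonneg_right hpy (Real.rpow_nonneg ht.le _)
        _ = 1 / μ y * h t := by simp [hhdef]; ring
  -- the key finite-sum bound
  have key : ∀ F : Finset V, ∑ y ∈ F, Wker μ s p x y ≤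
      (μ x / ((1 - s) * Real.Gamma (1 - s))) * K := by
    intro F
    rw [← Finset.sum_erase F (by simp [Wker] : Wker μ s p x x = 0)]
    set F' := F.erase x with hF'
    have hxF' : x ∉ F' := Finset.notMem_erase x F
    have step1 : ∑ y ∈ F', Wker μ s p x y =
        (s / Real.Gamma (1 - s) * μ x) *
          ∑ y ∈ F', ∫ t in Set.Ioi (0:ℝ), μ y * (p t x y * t ^ (-1 - s)) := by
      rw [Finset.mul_sum]
      apply Finset.sum_congr rfl
      intro y hy
      have hyx : y ≠ x := Finset.ne_of_mem_erase hy
      rw [Wker, if_neg hyx, integral_const_mul]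
      ring
    have step2 : ∑ y ∈ F', ∫ t in Set.Ioi (0:ℝ), μ y * (p t x y * t ^ (-1 - s)) =
        ∫ t in Set.Ioi (0:ℝ), ∑ y ∈ F', μ y * (p t x y * t ^ (-1 - s)) := by
      rw [integral_finset_sum]
      intro y hy
      exact ((hint_y y (Finset.ne_of_mem_erase hy)).const_mul (μ y))
    have step3 : ∫ t in Set.Ioi (0:ℝ), ∑ y ∈ F', μ y * (p t x y * t ^ (-1 - s)) ≤
        ∫ t in Set.Ioi (0:ℝ), h t := by
      apply setIntegral_mono_on
      · exact integrable_finset_sum _ (fun y hy =>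
          (hint_y y (Finset.ne_of_mem_erase hy)).const_mul (μ y))
      · exact hInt_h
      · exact measurableSet_Ioi
      · intro t ht
        have : ∑ y ∈ F', μ y * (p t x y * t ^ (-1 - s)) =
            (∑ y ∈ F', p t x y * μ y) * t ^ (-1 - s) := by
          rw [Finset.sum_mul]; apply Finset.sum_congr rfl; intro y _; ring
        rw [this]
        exact mul_le_mul_of_nonneg_right (hg_bound t ht F' hxF') (Real.rpow_nonneg ht.le _)
    have hc0 : 0 ≤ s / Real.Gamma (1 - s) * μ x := mul_nonneg (by positivity) (hμ x).le
    calc ∑ y ∈ F', Wker μ s p x y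
        ≤ (s / Real.Gamma (1 - s) * μ x) * (μ x * M * (1 / (1 - s)) + 1 / s) := by
          rw [step1, step2, ← hval]
          exact mul_le_mul_of_nonneg_left step3 hc0
      _ ≤ (μ x / ((1 - s) * Real.Gamma (1 - s))) * K := by
          rw [show (μ x / ((1 - s) * Real.Gamma (1 - s))) * K =
              μ x * K / ((1 - s) * Real.Gamma (1 - s)) by ring,
            le_div_iff₀ (by positivity : (0:ℝ) < (1 - s) * Real.Gamma (1 - s))]
          have e2 : s * (μ x * M) + (1 - s) ≤ K := by nlinarith [hK1, hK2]
          have e1 : s / Real.Gamma (1 - s) * μ x * (μ x * M * (1 / (1 - s)) + 1 / s) *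
              ((1 - s) * Real.Gamma (1 - s)) = μ x * (s * (μ x * M) + (1 - s)) := by
            field_simp
          rw [e1]
          exact mul_le_mul_of_nonneg_left e2 (hμ x).le
  -- conclude from finite sums to tsum
  by_cases hsumm : Summable (fun y => Wker μ s p x y)
  · exact Summable.tsum_le_of_sum_le hsumm key
  · rw [tsum_eq_zero_of_not_summable hsumm]
    exact hC0
end

section
/- Assume μ₀ := inf_{x∈V} μ(x) > 0. Then W^{s,2}(V) is complete: for every sequence u_n ∈ W^{s,2}(V) that is Cauchy with respect to the norm ‖·‖_{s,2}, there exists u ∈ W^{s,2}(V) with ‖u_n − u‖_{s,2} → 0 as n → ∞. -/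
open Filter Topology

/-- The fractional gradient pairing
`∇^s u ∇^s v(x) = (1/(2μ(x))) Σ_{y} W(x,y)(u(x) − u(y))(v(x) − v(y))`
(the diagonal term vanishes since `W(x,x) = 0`). -/
noncomputable def gradPair {V : Type*} (μ : V → ℝ) (W : V → V → ℝ) (u v : V → ℝ) (x : V) : ℝ :=
  (1 / (2 * μ x)) * ∑' y, W x y * (u x - u y) * (v x - v y)

/-- Membership in the fractional Sobolev space `W^{s,2}(V)`: `u` is bounded and
`∫_V (|∇^s u|² + u²) dμ < +∞`. -/
def memWs {V : Type*} (μ : V → ℝ) (W : V → V → ℝ) (u : V → ℝ) : Prop :=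
  (∃ C, ∀ x, |u x| ≤ C) ∧
  Summable fun x => (gradPair μ W u u x + (u x) ^ 2) * μ x

/-- The norm `‖u‖_{s,2} = (∫_V (|∇^s u|² + u²) dμ)^{1/2}`. -/
noncomputable def normWs {V : Type*} (μ : V → ℝ) (W : V → V → ℝ) (u : V → ℝ) : ℝ :=
  Real.sqrt (∑' x, (gradPair μ W u u x + (u x) ^ 2) * μ x)

section aux
variable {V : Type*} (μ : V → ℝ) (W : V → V → ℝ)

lemma inner_sq_summable (hWnonneg : ∀ x y, 0 ≤ W x y) (hWsum : ∀ x, Summable fun y => W x y)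
    {u : V → ℝ} {C : ℝ} (hC : ∀ x, |u x| ≤ C) (x : V) :
    Summable fun y => W x y * (u x - u y) * (u x - u y) := by
  refine Summable.of_nonneg_of_le (fun y => ?_) (fun y => ?_) ((hWsum x).mul_right (4 * C ^ 2))
  · have := mul_self_nonneg (u x - u y)
    nlinarith [hWnonneg x y]
  · have h1 : |u x - u y| ≤ 2 * C := by
      have := abs_sub_abs_le_abs_sub (u x) (u y)
      have := abs_sub (u x) (u y)
      calc |u x - u y| ≤ |u x| + |u y| := abs_sub _ _
        _ ≤ C + C := add_le_add (hC x) (hC y)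
        _ = 2 * C := by ring
    have h2 : (u x - u y) * (u x - u y) ≤ 4 * C ^ 2 := by
      have := abs_nonneg (u x - u y)
      nlinarith [abs_mul_abs_self (u x - u y)]
    have := hWnonneg x y
    nlinarith

lemma gradPair_nonneg (hμ : ∀ x, 0 < μ x) (hWnonneg : ∀ x y, 0 ≤ W x y) (u : V → ℝ) (x : V) :
    0 ≤ gradPair μ W u u x := by
  apply mul_nonneg
  · exact div_nonneg zero_le_one (by linarith [hμ x])
  · exact tsum_nonneg fun y => by nlinarith [hWnonneg x y, mul_self_nonneg (u x - u y)]

lemma term_nonneg (hμ : ∀ x, 0 < μ x) (hWnonneg : ∀ x y, 0 ≤ W x y) (u : V → ℝ) (x : V) :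
    0 ≤ (gradPair μ W u u x + (u x) ^ 2) * μ x :=
  mul_nonneg (by nlinarith [gradPair_nonneg μ W hμ hWnonneg u x, sq_nonneg (u x)]) (hμ x).le

lemma gradPair_quad (hμ : ∀ x, 0 < μ x) (hWnonneg : ∀ x y, 0 ≤ W x y)
    (hWsum : ∀ x, Summable fun y => W x y)
    {f g : V → ℝ} {Cf Cg : ℝ} (hf : ∀ x, |f x| ≤ Cf) (hg : ∀ x, |g x| ≤ Cg) (x : V) :
    gradPair μ W (fun z => f z + g z) (fun z => f z + g z) x ≤
      2 * gradPair μ W f f x + 2 * gradPair μ W g g x := by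
  have hsf := inner_sq_summable W hWnonneg hWsum hf x
  have hsg := inner_sq_summable W hWnonneg hWsum hg x
  have hle : ∀ y, W x y * ((f x + g x) - (f y + g y)) * ((f x + g x) - (f y + g y)) ≤
      2 * (W x y * (f x - f y) * (f x - f y)) + 2 * (W x y * (g x - g y) * (g x - g y)) := by
    intro y
    have := hWnonneg x y
    nlinarith [sq_nonneg ((f x - f y) - (g x - g y))]
  have hsum2 : Summable fun y => 2 * (W x y * (f x - f y) * (f x - f y)) +
      2 * (W x y * (g x - g y) * (g x - g y)) := ((hsf.mul_left 2).add (hsg.mul_left 2))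
  have hsumL : Summable fun y => W x y * ((f x + g x) - (f y + g y)) *
      ((f x + g x) - (f y + g y)) := by
    refine Summable.of_nonneg_of_le (fun y => ?_) hle hsum2
    have := hWnonneg x y
    nlinarith [mul_self_nonneg ((f x + g x) - (f y + g y))]
  have hT := Summable.tsum_le_tsum hle hsumL hsum2
  rw [Summable.tsum_add (hsf.mul_left 2) (hsg.mul_left 2), tsum_mul_left, tsum_mul_left] at hT
  unfold gradPair
  have hc : 0 ≤ 1 / (2 * μ x) := div_nonneg zero_le_one (by linarith [hμ x])
  calc (1 / (2 * μ x)) * ∑' y, W x y * ((f x + g x) - (f y + g y)) * ((f x + g x) - (f y + g y))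
      ≤ (1 / (2 * μ x)) * (2 * ∑' y, W x y * (f x - f y) * (f x - f y) +
        2 * ∑' y, W x y * (g x - g y) * (g x - g y)) := mul_le_mul_of_nonneg_left hT hc
    _ = 2 * ((1 / (2 * μ x)) * ∑' y, W x y * (f x - f y) * (f x - f y)) +
        2 * ((1 / (2 * μ x)) * ∑' y, W x y * (g x - g y) * (g x - g y)) := by ring

lemma gradPair_neg (u : V → ℝ) (x : V) :
    gradPair μ W (fun z => -u z) (fun z => -u z) x = gradPair μ W u u x := by
  unfold gradPair
  congr 1
  exact tsum_congr fun y => by ring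

end aux

section aux2
variable {V : Type*} (μ : V → ℝ) (W : V → V → ℝ)

lemma term_quad (hμ : ∀ x, 0 < μ x) (hWnonneg : ∀ x y, 0 ≤ W x y)
    (hWsum : ∀ x, Summable fun y => W x y)
    {f g : V → ℝ} {Cf Cg : ℝ} (hf : ∀ x, |f x| ≤ Cf) (hg : ∀ x, |g x| ≤ Cg) (x : V) :
    (gradPair μ W (fun z => f z + g z) (fun z => f z + g z) x + (f x + g x) ^ 2) * μ x ≤
      2 * ((gradPair μ W f f x + (f x) ^ 2) * μ x) +
      2 * ((gradPair μ W g g x + (g x) ^ 2) * μ x) := by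
  have h1 := gradPair_quad μ W hμ hWnonneg hWsum hf hg x
  have h2 : (f x + g x) ^ 2 ≤ 2 * (f x) ^ 2 + 2 * (g x) ^ 2 := by nlinarith [sq_nonneg (f x - g x)]
  have := (hμ x).le
  nlinarith

lemma memWs_add (hμ : ∀ x, 0 < μ x) (hWnonneg : ∀ x y, 0 ≤ W x y)
    (hWsum : ∀ x, Summable fun y => W x y)
    {f g : V → ℝ} (hf : memWs μ W f) (hg : memWs μ W g) :
    memWs μ W (fun z => f z + g z) := by
  obtain ⟨⟨Cf, hCf⟩, hsf⟩ := hf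
  obtain ⟨⟨Cg, hCg⟩, hsg⟩ := hg
  constructor
  · exact ⟨Cf + Cg, fun x => (abs_add_le _ _).trans (add_le_add (hCf x) (hCg x))⟩
  · refine Summable.of_nonneg_of_le
      (fun x => term_nonneg μ W hμ hWnonneg _ x)
      (fun x => term_quad μ W hμ hWnonneg hWsum hCf hCg x)
      ((hsf.mul_left 2).add (hsg.mul_left 2))

lemma memWs_neg {f : V → ℝ} (hf : memWs μ W f) : memWs μ W (fun z => -f z) := by
  obtain ⟨⟨Cf, hCf⟩, hsf⟩ := hf
  constructor
  · exact ⟨Cf, fun x => by simpa using hCf x⟩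
  · have : (fun x => (gradPair μ W (fun z => -f z) (fun z => -f z) x + (-f x) ^ 2) * μ x)
        = fun x => (gradPair μ W f f x + (f x) ^ 2) * μ x := by
      funext x
      rw [gradPair_neg]
      ring
    rw [this]
    exact hsf

lemma memWs_sub (hμ : ∀ x, 0 < μ x) (hWnonneg : ∀ x y, 0 ≤ W x y)
    (hWsum : ∀ x, Summable fun y => W x y)
    {f g : V → ℝ} (hf : memWs μ W f) (hg : memWs μ W g) :
    memWs μ W (fun z => f z - g z) := by
  have := memWs_add μ W hμ hWnonneg hWsum hf (memWs_neg μ W hg)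
  simpa [sub_eq_add_neg] using this

lemma pointwise_sq_bound (hμ : ∀ x, 0 < μ x) (hWnonneg : ∀ x y, 0 ≤ W x y)
    {w : V → ℝ} (hsum : Summable fun x => (gradPair μ W w w x + (w x) ^ 2) * μ x)
    {μ0 : ℝ} (hle : ∀ x, μ0 ≤ μ x) (x : V) :
    (w x) ^ 2 * μ0 ≤ ∑' z, (gradPair μ W w w z + (w z) ^ 2) * μ z := by
  have h1 : (gradPair μ W w w x + (w x) ^ 2) * μ x ≤
      ∑' z, (gradPair μ W w w z + (w z) ^ 2) * μ z :=
    Summable.le_tsum hsum x (fun z _ => term_nonneg μ W hμ hWnonneg w z)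
  have h2 := gradPair_nonneg μ W hμ hWnonneg w x
  have h3 := hle x
  nlinarith [sq_nonneg (w x), (hμ x).le]

lemma pointwise_abs_bound (hμ : ∀ x, 0 < μ x) (hWnonneg : ∀ x y, 0 ≤ W x y)
    {w : V → ℝ} (hsum : Summable fun x => (gradPair μ W w w x + (w x) ^ 2) * μ x)
    {μ0 : ℝ} (h0 : 0 ≤ μ0) (hle : ∀ x, μ0 ≤ μ x) (x : V) :
    |w x| * Real.sqrt μ0 ≤ normWs μ W w := by
  have h := pointwise_sq_bound μ W hμ hWnonneg hsum hle x
  have : |w x| * Real.sqrt μ0 = Real.sqrt ((w x) ^ 2 * μ0) := by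
    rw [Real.sqrt_mul (sq_nonneg _), Real.sqrt_sq_eq_abs]
  rw [this, normWs]
  exact Real.sqrt_le_sqrt h

end aux2

section aux3
variable {V : Type*} (μ : V → ℝ) (W : V → V → ℝ)

lemma term_sub_symm (f g : V → ℝ) (x : V) :
    (gradPair μ W (fun z => f z - g z) (fun z => f z - g z) x + (f x - g x) ^ 2) * μ x
    = (gradPair μ W (fun z => g z - f z) (fun z => g z - f z) x + (g x - f x) ^ 2) * μ x := by
  unfold gradPair
  have : (∑' y, W x y * ((f x - g x) - (f y - g y)) * ((f x - g x) - (f y - g y)))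
      = ∑' y, W x y * ((g x - f x) - (g y - f y)) * ((g x - f x) - (g y - f y)) :=
    tsum_congr fun y => by ring
  simp only [this]
  ring

end aux3

/-- Assuming `inf_V μ > 0`, the space `W^{s,2}(V)` is complete: every Cauchy sequence with
respect to `‖·‖_{s,2}` converges in `W^{s,2}(V)`. -/
theorem fractionalSobolev_complete
    {V : Type*} [Countable V] [Infinite V]
    (μ : V → ℝ) (hμ : ∀ x, 0 < μ x) (hμ0 : 0 < ⨅ x, μ x)
    (W : V → V → ℝ)
    (hWsymm : ∀ x y, W x y = W y x)
    (hWdiag : ∀ x, W x x = 0)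
    (hWnonneg : ∀ x y, 0 ≤ W x y)
    (hWsum : ∀ x, Summable fun y => W x y)
    (u : ℕ → V → ℝ) (hu : ∀ n, memWs μ W (u n))
    (hcauchy : ∀ ε : ℝ, 0 < ε → ∃ N : ℕ, ∀ m ≥ N, ∀ n ≥ N,
      normWs μ W (fun x => u m x - u n x) < ε) :
    ∃ v : V → ℝ, memWs μ W v ∧
      Tendsto (fun n => normWs μ W (fun x => u n x - v x)) atTop (𝓝 0) := by
  set μ0 := ⨅ x, μ x with hμ0def
  have hbdd : BddBelow (Set.range μ) := ⟨0, by rintro _ ⟨x, rfl⟩; exact (hμ x).le⟩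
  have hle : ∀ x, μ0 ≤ μ x := fun x => ciInf_le hbdd x
  have hs0 : 0 < Real.sqrt μ0 := Real.sqrt_pos.mpr hμ0
  have hsub : ∀ m n, memWs μ W (fun x => u m x - u n x) :=
    fun m n => memWs_sub μ W hμ hWnonneg hWsum (hu m) (hu n)
  have hpt : ∀ m n x, |u m x - u n x| * Real.sqrt μ0 ≤ normWs μ W (fun z => u m z - u n z) :=
    fun m n x => pointwise_abs_bound μ W hμ hWnonneg (hsub m n).2 hμ0.le hle x
  -- pointwise Cauchy
  have hC : ∀ x, CauchySeq (fun n => u n x) := by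
    intro x
    rw [Metric.cauchySeq_iff]
    intro ε hε
    obtain ⟨N, hN⟩ := hcauchy (ε * Real.sqrt μ0) (mul_pos hε hs0)
    refine ⟨N, fun m hm n hn => ?_⟩
    have h1 := hpt m n x
    have h2 := hN m hm n hn
    rw [Real.dist_eq]
    have h3 : |u m x - u n x| * Real.sqrt μ0 < ε * Real.sqrt μ0 := lt_of_le_of_lt h1 h2
    exact lt_of_mul_lt_mul_right h3 hs0.le
  have hex : ∀ x, ∃ l, Tendsto (fun n => u n x) atTop (𝓝 l) :=
    fun x => cauchySeq_tendsto_of_complete (hC x)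
  choose v hv using hex
  -- uniform bound for tails and v
  obtain ⟨N₁, hN₁⟩ := hcauchy (Real.sqrt μ0) hs0
  obtain ⟨C1, hC1⟩ := (hu N₁).1
  have htail : ∀ m, N₁ ≤ m → ∀ x, |u m x| ≤ C1 + 1 := by
    intro m hm x
    have h1 := hpt m N₁ x
    have h2 := hN₁ m hm N₁ le_rfl
    have h3 : |u m x - u N₁ x| < 1 := by
      have h4 : |u m x - u N₁ x| * Real.sqrt μ0 < 1 * Real.sqrt μ0 := by
        simpa using lt_of_le_of_lt h1 h2
      exact lt_of_mul_lt_mul_right h4 hs0.le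
    calc |u m x| = |(u m x - u N₁ x) + u N₁ x| := by ring_nf
      _ ≤ |u m x - u N₁ x| + |u N₁ x| := abs_add_le _ _
      _ ≤ 1 + C1 := add_le_add h3.le (hC1 x)
      _ = C1 + 1 := by ring
  have hvbd : ∀ x, |v x| ≤ C1 + 1 := by
    intro x
    apply le_of_tendsto (hv x).abs
    filter_upwards [eventually_ge_atTop N₁] with m hm using htail m hm x
  -- key estimate
  have key : ∀ ε : ℝ, 0 < ε → ∃ N : ℕ, ∀ n, N ≤ n →
      (Summable fun x => (gradPair μ W (fun z => v z - u n z) (fun z => v z - u n z) x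
        + (v x - u n x) ^ 2) * μ x) ∧
      (∑' x, (gradPair μ W (fun z => v z - u n z) (fun z => v z - u n z) x
        + (v x - u n x) ^ 2) * μ x) ≤ ε ^ 2 := by
    intro ε hε
    obtain ⟨N, hN⟩ := hcauchy ε hε
    refine ⟨N, fun n hn => ?_⟩
    obtain ⟨Cn, hCn⟩ := (hu n).1
    set B := (C1 + 1) + Cn with hB
    have hdbd : ∀ᶠ m in atTop, ∀ x, |u m x - u n x| ≤ B := by
      filter_upwards [eventually_ge_atTop N₁] with m hm x
      calc |u m x - u n x| ≤ |u m x| + |u n x| := abs_sub _ _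
        _ ≤ (C1 + 1) + Cn := add_le_add (htail m hm x) (hCn x)
    have hlim : ∀ y, Tendsto (fun m => u m y - u n y) atTop (𝓝 (v y - u n y)) :=
      fun y => (hv y).sub_const _
    -- pointwise term convergence
    have hterm : ∀ x, Tendsto
        (fun m => (gradPair μ W (fun z => u m z - u n z) (fun z => u m z - u n z) x
          + (u m x - u n x) ^ 2) * μ x) atTop
        (𝓝 ((gradPair μ W (fun z => v z - u n z) (fun z => v z - u n z) x
          + (v x - u n x) ^ 2) * μ x)) := by
      intro x
      have hg : Tendsto
          (fun m => ∑' y, W x y * ((u m x - u n x) - (u m y - u n y))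
            * ((u m x - u n x) - (u m y - u n y))) atTop
          (𝓝 (∑' y, W x y * ((v x - u n x) - (v y - u n y))
            * ((v x - u n x) - (v y - u n y)))) := by
        apply tendsto_tsum_of_dominated_convergence
          (bound := fun y => W x y * (4 * B ^ 2)) ((hWsum x).mul_right _)
        · intro y
          exact (tendsto_const_nhds.mul ((hlim x).sub (hlim y))).mul ((hlim x).sub (hlim y))
        · filter_upwards [hdbd] with m hm y
          rw [Real.norm_eq_abs, abs_mul, abs_mul, abs_of_nonneg (hWnonneg x y)]
          have hd : |(u m x - u n x) - (u m y - u n y)| ≤ 2 * B :=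
            (abs_sub _ _).trans (by linarith [hm x, hm y])
          have hd0 := abs_nonneg ((u m x - u n x) - (u m y - u n y))
          have h4 : |(u m x - u n x) - (u m y - u n y)| * |(u m x - u n x) - (u m y - u n y)|
              ≤ (2 * B) * (2 * B) := mul_le_mul hd hd hd0 (le_trans hd0 hd)
          calc W x y * |(u m x - u n x) - (u m y - u n y)| * |(u m x - u n x) - (u m y - u n y)|
              = W x y * (|(u m x - u n x) - (u m y - u n y)| * |(u m x - u n x) - (u m y - u n y)|) := by ring
            _ ≤ W x y * ((2 * B) * (2 * B)) := mul_le_mul_of_nonneg_left h4 (hWnonneg x y)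
            _ = W x y * (4 * B ^ 2) := by ring
      have hgrad : Tendsto
          (fun m => gradPair μ W (fun z => u m z - u n z) (fun z => u m z - u n z) x) atTop
          (𝓝 (gradPair μ W (fun z => v z - u n z) (fun z => v z - u n z) x)) := by
        unfold gradPair
        simpa using hg.const_mul (1 / (2 * μ x))
      exact (hgrad.add ((hlim x).pow 2)).mul_const (μ x)
    -- tsum bound for m ≥ N
    have hεsq : ∀ m, N ≤ m →
        (∑' x, (gradPair μ W (fun z => u m z - u n z) (fun z => u m z - u n z) x
          + (u m x - u n x) ^ 2) * μ x) < ε ^ 2 := by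
      intro m hm
      have h1 := hN m hm n hn
      rw [normWs] at h1
      exact (Real.sqrt_lt' hε).mp h1
    have hF : ∀ F : Finset V,
        (∑ x ∈ F, (gradPair μ W (fun z => v z - u n z) (fun z => v z - u n z) x
          + (v x - u n x) ^ 2) * μ x) ≤ ε ^ 2 := by
      intro F
      have h1 := tendsto_finset_sum F (fun x _ => hterm x)
      apply le_of_tendsto h1
      filter_upwards [eventually_ge_atTop N] with m hm
      calc (∑ x ∈ F, (gradPair μ W (fun z => u m z - u n z) (fun z => u m z - u n z) x
            + (u m x - u n x) ^ 2) * μ x)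
          ≤ ∑' x, (gradPair μ W (fun z => u m z - u n z) (fun z => u m z - u n z) x
            + (u m x - u n x) ^ 2) * μ x :=
            Summable.sum_le_tsum F (fun x _ => term_nonneg μ W hμ hWnonneg _ x) (hsub m n).2
        _ ≤ ε ^ 2 := (hεsq m hm).le
    have hsummable : Summable fun x =>
        (gradPair μ W (fun z => v z - u n z) (fun z => v z - u n z) x
          + (v x - u n x) ^ 2) * μ x :=
      summable_of_sum_le (fun x => term_nonneg μ W hμ hWnonneg _ x) hF
    exact ⟨hsummable, Summable.tsum_le_of_sum_le hsummable hF⟩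
  -- membership of v
  obtain ⟨N₂, hN₂⟩ := key 1 one_pos
  have hvmem : memWs μ W v := by
    obtain ⟨C₂, hC₂⟩ := (hu N₂).1
    have h1 : memWs μ W (fun z => v z - u N₂ z) := by
      refine ⟨⟨(C1 + 1) + C₂, fun x => ?_⟩, (hN₂ N₂ le_rfl).1⟩
      exact (abs_sub _ _).trans (add_le_add (hvbd x) (hC₂ x))
    have h2 := memWs_add μ W hμ hWnonneg hWsum h1 (hu N₂)
    simpa using h2
  refine ⟨v, hvmem, ?_⟩
  rw [Metric.tendsto_atTop]
  intro ε hε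
  obtain ⟨N, hN⟩ := key (ε / 2) (half_pos hε)
  refine ⟨N, fun n hn => ?_⟩
  obtain ⟨hs, ht⟩ := hN n hn
  have hnn : (0:ℝ) ≤ normWs μ W (fun x => u n x - v x) := by
    unfold normWs; exact Real.sqrt_nonneg _
  rw [Real.dist_eq, sub_zero, abs_of_nonneg hnn]
  have heq : normWs μ W (fun x => u n x - v x) = normWs μ W (fun x => v x - u n x) := by
    unfold normWs
    congr 1
    exact tsum_congr fun x => term_sub_symm μ W (u n) v x
  rw [heq]
  calc normWs μ W (fun x => v x - u n x)
      ≤ Real.sqrt ((ε / 2) ^ 2) := Real.sqrt_le_sqrt ht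
    _ = ε / 2 := by rw [Real.sqrt_sq (by linarith)]
    _ < ε := by linarith
end

section
/- Assume μ₀ := inf_{x∈V} μ(x) > 0. Then for every u ∈ W^{s,2}(V): ‖u‖_2 ≤ ‖u‖_{s,2}; ‖u‖_∞² ≤ (1/μ₀)‖u‖_{s,2}²; and for every q with 2 < q < ∞, ‖u‖_q^q ≤ μ₀^{(2−q)/2} ‖u‖_{s,2}^q. In particular W^{s,2}(V) is continuously embedded in L^q(V) for all 2 ≤ q ≤ ∞. -/
open Filter Topology

/-- Assuming `μ₀ := inf_V μ > 0`, for every `u ∈ W^{s,2}(V)`: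
`‖u‖_2 ≤ ‖u‖_{s,2}`, `‖u‖_∞² ≤ (1/μ₀)‖u‖_{s,2}²`, and for `2 < q < ∞`,
`‖u‖_q^q ≤ μ₀^{(2−q)/2} ‖u‖_{s,2}^q`; so `W^{s,2}(V)` embeds continuously in `L^q(V)`,
`2 ≤ q ≤ ∞`. -/
theorem fractionalSobolev_embedding
    {V : Type*} [Countable V] [Infinite V]
    (μ : V → ℝ) (hμ : ∀ x, 0 < μ x) (hμ0 : 0 < ⨅ x, μ x)
    (W : V → V → ℝ)
    (hWsymm : ∀ x y, W x y = W y x)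
    (hWdiag : ∀ x, W x x = 0)
    (hWnonneg : ∀ x y, 0 ≤ W x y)
    (hWsum : ∀ x, Summable fun y => W x y)
    (u : V → ℝ) (hu : memWs μ W u) :
    Real.sqrt (∑' x, (u x) ^ 2 * μ x) ≤ normWs μ W u ∧
    (⨆ x, |u x|) ^ 2 ≤ (1 / ⨅ x, μ x) * (normWs μ W u) ^ 2 ∧
    ∀ q : ℝ, 2 < q →
      ∑' x, |u x| ^ q * μ x ≤ (⨅ x, μ x) ^ ((2 - q) / 2) * (normWs μ W u) ^ q := by
  classical
  have hne : Nonempty V := inferInstance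
  set m := ⨅ x, μ x with hmdef
  have hbdd : BddBelow (Set.range μ) := ⟨0, by rintro y ⟨x, rfl⟩; exact (hμ x).le⟩
  have hmle : ∀ x, m ≤ μ x := fun x => ciInf_le hbdd x
  have hgrad : ∀ x, 0 ≤ gradPair μ W u u x := by
    intro x
    apply mul_nonneg (div_nonneg zero_le_one (by linarith [hμ x]))
    exact tsum_nonneg fun y => by nlinarith [hWnonneg x y, sq_nonneg (u x - u y)]
  have hterm : ∀ x, 0 ≤ (gradPair μ W u u x + u x ^ 2) * μ x :=
    fun x => mul_nonneg (by nlinarith [hgrad x, sq_nonneg (u x)]) (hμ x).le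
  set T := ∑' x, (gradPair μ W u u x + u x ^ 2) * μ x with hTdef
  have hNdef : normWs μ W u = Real.sqrt T := rfl
  have hT0 : 0 ≤ T := tsum_nonneg hterm
  have hN2 : normWs μ W u ^ 2 = T := by rw [hNdef]; exact Real.sq_sqrt hT0
  have hptle : ∀ x, u x ^ 2 * μ x ≤ (gradPair μ W u u x + u x ^ 2) * μ x :=
    fun x => by nlinarith [mul_nonneg (hgrad x) (hμ x).le]
  have hsum2 : Summable fun x => u x ^ 2 * μ x :=
    hu.2.of_nonneg_of_le (fun x => mul_nonneg (sq_nonneg _) (hμ x).le) hptle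
  have hle2 : (∑' x, u x ^ 2 * μ x) ≤ T := Summable.tsum_le_tsum hptle hsum2 hu.2
  have hsum20 : 0 ≤ ∑' x, u x ^ 2 * μ x :=
    tsum_nonneg fun x => mul_nonneg (sq_nonneg _) (hμ x).le
  have part1 : Real.sqrt (∑' x, (u x) ^ 2 * μ x) ≤ normWs μ W u := by
    rw [hNdef]; exact Real.sqrt_le_sqrt hle2
  -- sup bound
  have hpt : ∀ x, u x ^ 2 ≤ (1 / m) * T := by
    intro x
    have h2 : (gradPair μ W u u x + u x ^ 2) * μ x ≤ T := Summable.le_tsum hu.2 x (fun y _ => hterm y)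
    have h1 : u x ^ 2 * m ≤ T := by
      nlinarith [mul_nonneg (hgrad x) (hμ x).le,
        mul_nonneg (sub_nonneg.mpr (hmle x)) (sq_nonneg (u x))]
    rw [one_div_mul_eq_div]
    exact (le_div_iff₀ hμ0).mpr h1
  have hbddA : BddAbove (Set.range fun x => |u x|) := by
    obtain ⟨C, hC⟩ := hu.1
    exact ⟨C, by rintro y ⟨x, rfl⟩; exact hC x⟩
  set S := ⨆ x, |u x| with hSdef
  have hR0 : 0 ≤ (1 / m) * T := mul_nonneg (one_div_nonneg.mpr hμ0.le) hT0
  have hSle : S ≤ Real.sqrt ((1 / m) * T) := by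
    apply ciSup_le
    intro x
    rw [← Real.sqrt_sq_eq_abs]
    exact Real.sqrt_le_sqrt (hpt x)
  have hS0 : 0 ≤ S :=
    (abs_nonneg _).trans (le_ciSup hbddA (Classical.arbitrary V))
  have part2 : S ^ 2 ≤ (1 / m) * normWs μ W u ^ 2 := by
    rw [hN2]
    calc S ^ 2 ≤ Real.sqrt ((1 / m) * T) ^ 2 := pow_le_pow_left₀ hS0 hSle 2
      _ = (1 / m) * T := Real.sq_sqrt hR0
  refine ⟨part1, part2, ?_⟩
  intro q hq
  have hq2 : (0:ℝ) ≤ q - 2 := by linarith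
  have hpt3 : ∀ x, |u x| ^ q * μ x ≤ S ^ (q - 2) * (u x ^ 2 * μ x) := by
    intro x
    have h1 : |u x| ^ (q - 2) * |u x| ^ (2:ℝ) = |u x| ^ q := by
      rw [← Real.rpow_add' (abs_nonneg _) (by linarith : q - 2 + 2 ≠ 0)]
      congr 1; ring
    have h2 : |u x| ^ (2:ℝ) = u x ^ 2 := by
      rw [show (2:ℝ) = ((2:ℕ):ℝ) by norm_num, Real.rpow_natCast, sq_abs]
    have h3 : |u x| ^ (q - 2) ≤ S ^ (q - 2) :=
      Real.rpow_le_rpow (abs_nonneg _) (le_ciSup hbddA x) hq2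
    calc |u x| ^ q * μ x = |u x| ^ (q - 2) * (u x ^ 2 * μ x) := by
          rw [← h1, h2]; ring
      _ ≤ S ^ (q - 2) * (u x ^ 2 * μ x) :=
          mul_le_mul_of_nonneg_right h3 (mul_nonneg (sq_nonneg _) (hμ x).le)
  have hsumq : Summable fun x => |u x| ^ q * μ x :=
    Summable.of_nonneg_of_le
      (fun x => mul_nonneg (Real.rpow_nonneg (abs_nonneg _) q) (hμ x).le)
      hpt3 (hsum2.mul_left _)
  have h3 : (∑' x, |u x| ^ q * μ x) ≤ S ^ (q - 2) * ∑' x, u x ^ 2 * μ x := by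
    calc (∑' x, |u x| ^ q * μ x) ≤ ∑' x, S ^ (q - 2) * (u x ^ 2 * μ x) :=
          Summable.tsum_le_tsum hpt3 hsumq (hsum2.mul_left _)
      _ = S ^ (q - 2) * ∑' x, u x ^ 2 * μ x := tsum_mul_left
  have hS2 : S ^ (q - 2) ≤ ((1 / m) * T) ^ ((q - 2) / 2) := by
    calc S ^ (q - 2) ≤ Real.sqrt ((1 / m) * T) ^ (q - 2) :=
          Real.rpow_le_rpow hS0 hSle hq2
      _ = ((1 / m) * T) ^ ((q - 2) / 2) := by
          rw [Real.sqrt_eq_rpow, ← Real.rpow_mul hR0]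
          congr 1; ring
  have hmul : ((1 / m) * T) ^ ((q - 2) / 2) = m ^ ((2 - q) / 2) * T ^ ((q - 2) / 2) := by
    rw [Real.mul_rpow (one_div_nonneg.mpr hμ0.le) hT0, one_div,
      Real.inv_rpow hμ0.le, ← Real.rpow_neg hμ0.le]
    congr 2; ring
  have hTT : T ^ ((q - 2) / 2) * T = T ^ (q / 2) := by
    nth_rewrite 2 [← Real.rpow_one T]
    rw [← Real.rpow_add' hT0 (by intro h; linarith : (q - 2) / 2 + 1 ≠ 0)]
    congr 1; ring
  have hNq : normWs μ W u ^ q = T ^ (q / 2) := by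
    rw [hNdef, Real.sqrt_eq_rpow, ← Real.rpow_mul hT0]
    congr 1; ring
  calc (∑' x, |u x| ^ q * μ x) ≤ S ^ (q - 2) * ∑' x, u x ^ 2 * μ x := h3
    _ ≤ ((1 / m) * T) ^ ((q - 2) / 2) * T :=
        mul_le_mul hS2 hle2 hsum20 (Real.rpow_nonneg hR0 _)
    _ = m ^ ((2 - q) / 2) * (T ^ ((q - 2) / 2) * T) := by rw [hmul]; ring
    _ = m ^ ((2 - q) / 2) * T ^ (q / 2) := by rw [hTT]
    _ = m ^ ((2 - q) / 2) * normWs μ W u ^ q := by rw [hNq]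
end

section
/- Assume μ₀ := inf_{x∈V} μ(x) > 0. If u ∈ H_s satisfies the weak formulation ∫_V (∇^s u ∇^s φ + h u φ) dμ = ∫_V f(x, u(x)) φ(x) dμ for every finitely supported φ : V → ℝ, then u is a pointwise solution: (−Δ)^s u(x) + h(x) u(x) = f(x, u(x)) for every x ∈ V. -/
open Filter Topology

/-- The fractional Laplacian `(−Δ)^s u(x) = (1/μ(x)) Σ_{y} W(x,y)(u(x) − u(y))`. -/
noncomputable def lapS {V : Type*} (μ : V → ℝ) (W : V → V → ℝ) (u : V → ℝ) (x : V) : ℝ :=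
  (1 / μ x) * ∑' y, W x y * (u x - u y)

/-- The norm `‖u‖_{H_s} = (∫_V (|∇^s u|² + h u²) dμ)^{1/2}`. -/
noncomputable def normHs {V : Type*} (μ : V → ℝ) (W : V → V → ℝ) (h : V → ℝ) (u : V → ℝ) : ℝ :=
  Real.sqrt (∑' x, (gradPair μ W u u x + h x * (u x) ^ 2) * μ x)

/-- Membership in `H_s`. -/
def memHs {V : Type*} (μ : V → ℝ) (W : V → V → ℝ) (h : V → ℝ) (u : V → ℝ) : Prop :=
  (Summable fun x => (gradPair μ W u u x + h x * (u x) ^ 2) * μ x) ∧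
  ∃ uk : ℕ → V → ℝ, (∀ k, (Function.support (uk k)).Finite) ∧
    Tendsto (fun k => normHs μ W h (fun x => uk k x - u x)) atTop (𝓝 0)

/-- A weak solution `u ∈ H_s` of `(−Δ)^s u + h u = f(x,u)` (tested against all finitely
supported `φ`) is a pointwise solution. -/
theorem weak_solution_is_pointwise_solution
    {V : Type*} [Countable V] [Infinite V]
    (μ : V → ℝ) (hμ : ∀ x, 0 < μ x) (hμ0 : 0 < ⨅ x, μ x)
    (W : V → V → ℝ)
    (hWsymm : ∀ x y, W x y = W y x)
    (hWdiag : ∀ x, W x x = 0)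
    (hWnonneg : ∀ x y, 0 ≤ W x y)
    (hWsum : ∀ x, Summable fun y => W x y)
    (h : V → ℝ) (hh0 : 0 < ⨅ x, h x)
    (f : V → ℝ → ℝ)
    (u : V → ℝ) (hu : memHs μ W h u)
    (hweak : ∀ φ : V → ℝ, (Function.support φ).Finite →
      ∑' x, (gradPair μ W u φ x + h x * u x * φ x) * μ x
        = ∑' x, f x (u x) * φ x * μ x) :
    ∀ x, lapS μ W u x + h x * u x = f x (u x) := by
  classical
  obtain ⟨hsum, -⟩ := hu
  have hbdd_h : BddBelow (Set.range h) := by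
    by_contra hb
    rw [Real.iInf_of_not_bddBelow hb] at hh0; exact lt_irrefl 0 hh0
  have hbdd_μ : BddBelow (Set.range μ) := by
    by_contra hb
    rw [Real.iInf_of_not_bddBelow hb] at hμ0; exact lt_irrefl 0 hμ0
  have hhle : ∀ x, (⨅ x, h x) ≤ h x := fun x => ciInf_le hbdd_h x
  have hμle : ∀ x, (⨅ x, μ x) ≤ μ x := fun x => ciInf_le hbdd_μ x
  have hhpos : ∀ x, 0 < h x := fun x => lt_of_lt_of_le hh0 (hhle x)
  have hgrad_nonneg : ∀ x, 0 ≤ gradPair μ W u u x := by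
    intro x
    have := hμ x
    apply mul_nonneg (by positivity)
    apply tsum_nonneg
    intro y
    rw [mul_assoc]
    exact mul_nonneg (hWnonneg x y) (mul_self_nonneg _)
  have hsq : Summable (fun x => h x * u x ^ 2 * μ x) := by
    apply Summable.of_nonneg_of_le ?_ ?_ hsum
    · intro x
      have h1 := hhpos x; have h2 := hμ x
      positivity
    · intro x
      have := hgrad_nonneg x; have := (hμ x).le
      nlinarith
  have hu2 : Summable (fun x => u x ^ 2) := by
    apply Summable.of_nonneg_of_le (fun x => sq_nonneg _) ?_
      (hsq.mul_left (1 / ((⨅ x, h x) * (⨅ x, μ x))))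
    intro x
    rw [div_mul_eq_mul_div, one_mul, le_div_iff₀ (by positivity)]
    have h1 := hhle x; have h2 := hμle x; have h3 := hh0; have h4 := hμ0
    have h5 : (⨅ x, h x) * (⨅ x, μ x) ≤ h x * μ x :=
      mul_le_mul h1 h2 h4.le (hhpos x).le
    nlinarith [sq_nonneg (u x)]
  have hubd : ∀ x, |u x| ≤ Real.sqrt (∑' x, u x ^ 2) := by
    intro x
    rw [← Real.sqrt_sq_eq_abs]
    exact Real.sqrt_le_sqrt (Summable.le_tsum hu2 x (fun _ _ => sq_nonneg _))
  set M := Real.sqrt (∑' x, u x ^ 2) with hM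
  intro x₀
  have hS : Summable (fun y => W x₀ y * (u x₀ - u y)) := by
    apply Summable.of_abs
    apply Summable.of_nonneg_of_le (fun y => abs_nonneg _) ?_ ((hWsum x₀).mul_right (|u x₀| + M))
    intro y
    rw [abs_mul, abs_of_nonneg (hWnonneg x₀ y)]
    have : |u x₀ - u y| ≤ |u x₀| + M := (abs_sub _ _).trans (by linarith [hubd y])
    exact mul_le_mul_of_nonneg_left this (hWnonneg x₀ y)
  set S := ∑' y, W x₀ y * (u x₀ - u y) with hSdef
  set φ : V → ℝ := fun y => if y = x₀ then 1 else 0 with hφ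
  have hφfin : (Function.support φ).Finite := by
    apply Set.Finite.subset (Set.finite_singleton x₀)
    intro y hy
    by_contra hne
    simp only [Set.mem_singleton_iff] at hne
    exact hy (if_neg hne)
  have key := hweak φ hφfin
  have hRHS : ∑' x, f x (u x) * φ x * μ x = f x₀ (u x₀) * μ x₀ := by
    rw [tsum_eq_single x₀ (fun b hb => by simp [hφ, hb])]
    simp [hφ]
  have hg : ∀ x, (gradPair μ W u φ x + h x * u x * φ x) * μ x
      = (1 / 2) * (W x₀ x * (u x₀ - u x))
        + (if x = x₀ then S / 2 + h x₀ * u x₀ * μ x₀ else 0) := by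
    intro x
    by_cases hx : x = x₀
    · rw [hx]
      have hinner : (fun y => W x₀ y * (u x₀ - u y) * (φ x₀ - φ y))
          = fun y => W x₀ y * (u x₀ - u y) := by
        funext y
        by_cases hy : y = x₀
        · rw [hy]; simp [hWdiag]
        · simp [hφ, hy]
      have hμne : μ x₀ ≠ 0 := (hμ x₀).ne'
      unfold gradPair
      rw [hinner, ← hSdef]
      simp only [hφ, if_pos rfl, hWdiag x₀, sub_self, mul_zero, zero_mul, mul_one]
      field_simp
      rw [if_pos trivial]
      ring
    · simp only [if_neg hx, add_zero]
      have hφx : φ x = 0 := if_neg hx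
      have hinner : (∑' y, W x y * (u x - u y) * (φ x - φ y))
          = -(W x x₀ * (u x - u x₀)) := by
        rw [tsum_eq_single x₀ (fun b hb => by simp [hφ, hx, hb])]
        simp [hφ, hx]
      unfold gradPair
      rw [hinner, hφx]
      have hμne : μ x ≠ 0 := (hμ x).ne'
      rw [hWsymm x₀ x]
      field_simp
      ring
  have hsum1 : Summable (fun x => (1 / 2) * (W x₀ x * (u x₀ - u x))) := by
    exact hS.mul_left (1 / 2)
  have hsum2 : Summable (fun x : V => if x = x₀ then S / 2 + h x₀ * u x₀ * μ x₀ else 0) := by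
    apply summable_of_ne_finset_zero (s := {x₀})
    intro b hb
    simp only [Finset.mem_singleton] at hb
    exact if_neg hb
  have hLHS : ∑' x, (gradPair μ W u φ x + h x * u x * φ x) * μ x
      = S / 2 + (S / 2 + h x₀ * u x₀ * μ x₀) := by
    rw [tsum_congr hg, Summable.tsum_add hsum1 hsum2, tsum_mul_left, tsum_ite_eq, ← hSdef]
    ring
  rw [hLHS, hRHS] at key
  have hμne : μ x₀ ≠ 0 := (hμ x₀).ne'
  unfold lapS
  rw [← hSdef]
  field_simp
  linarith
end

section
/- Assume μ₀ := inf_{x∈V} μ(x) > 0, W(x,y) > 0 for all x ≠ y, and f(x,y) = 0 for all x ∈ V and all y ≤ 0. If u ∈ H_s is a nontrivial (u ≢ 0) weak solution, i.e., ∫_V (∇^s u ∇^s φ + h u φ) dμ = ∫_V f(x, u(x)) φ(x) dμ for all φ ∈ H_s, then u(x) > 0 for every x ∈ V. -/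
/-!
Testing the weak formulation against the indicator of a single vertex shows that a weak solution
solves `(−Δ)^s u + h u = f(x, u)` pointwise. Since `h` and `μ` are bounded below by positive
constants, `u ∈ H_s` is square summable, so `u` tends to `0` at infinity; if it took a negative
value it would attain a negative minimum at some `x₀`, where `f(x₀, u(x₀)) = 0` and
`(−Δ)^s u(x₀) ≤ 0`, contradicting `h(x₀) u(x₀) < 0`. Hence `u ≥ 0`, and a zero of `u` is a
minimum at which `(−Δ)^s u` vanishes; as `W > 0` off the diagonal, this forces `u ≡ 0`.
-/

open Filter Topology

noncomputable def fracLaplacian {V : Type*} (μ : V → ℝ) (W : V → V → ℝ) (u : V → ℝ) (x : V) : ℝ :=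
  (1 / μ x) * ∑' y, W x y * (u x - u y)

def IsWeakSolution {V : Type*} (μ : V → ℝ) (W : V → V → ℝ) (h : V → ℝ) (f : V → ℝ → ℝ)
    (u : V → ℝ) : Prop :=
  ∀ φ : V → ℝ, memHs μ W h φ →
    ∑' x, (gradPair μ W u φ x + h x * u x * φ x) * μ x = ∑' x, f x (u x) * φ x * μ x

theorem ciInf_le_of_iInf_pos {ι : Sort*} {g : ι → ℝ} (hg : 0 < ⨅ i, g i) (i : ι) :
    ⨅ i, g i ≤ g i := by
  refine ciInf_le ?_ i
  by_contra hb
  rw [Real.iInf_of_not_bddBelow hb] at hg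
  exact hg.false

theorem tendsto_cofinite_zero_of_summable_sq {α : Type*} {u : α → ℝ}
    (hu : Summable fun x => u x ^ 2) : Tendsto u cofinite (𝓝 0) := by
  rw [tendsto_zero_iff_abs_tendsto_zero]
  simpa [Function.comp_def, Real.sqrt_sq_eq_abs] using hu.tendsto_cofinite_zero.sqrt

theorem exists_forall_le_of_tendsto_cofinite_zero {α : Type*} {u : α → ℝ}
    (hu : Tendsto u cofinite (𝓝 0)) {x₁ : α} (hx₁ : u x₁ < 0) : ∃ x₀, ∀ y, u x₀ ≤ u y := by
  have hfin : Set.Finite {y | u y ≤ u x₁} := by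
    simpa using eventually_cofinite.mp (hu.eventually (lt_mem_nhds hx₁))
  obtain ⟨x₀, hx₀, hmin⟩ := Set.exists_min_image _ u hfin ⟨x₁, le_refl (u x₁)⟩
  refine ⟨x₀, fun y => ?_⟩
  by_cases hy : u y ≤ u x₁
  exacts [hmin y hy, hx₀.trans (le_of_not_ge hy)]

theorem Summable.mul_of_tendsto_cofinite {α : Type*} {w g : α → ℝ} (hw : Summable w)
    {a : ℝ} (hg : Tendsto g cofinite (𝓝 a)) : Summable fun y => w y * g y := by
  obtain ⟨C, hC⟩ := hg.abs.bddAbove_range_of_cofinite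
  refine (hw.abs.mul_right C).of_norm_bounded fun y => ?_
  rw [Real.norm_eq_abs, abs_mul]
  exact mul_le_mul_of_nonneg_left (hC ⟨y, rfl⟩) (abs_nonneg _)

section

variable {V : Type*} {μ : V → ℝ} {W : V → V → ℝ} {h : V → ℝ}

theorem gradPair_self_nonneg {x : V} (hμ : 0 ≤ μ x) (hW : ∀ y, 0 ≤ W x y) (u : V → ℝ) :
    0 ≤ gradPair μ W u u x :=
  mul_nonneg (by positivity) (tsum_nonneg fun y => by
    rw [mul_assoc]; exact mul_nonneg (hW y) (mul_self_nonneg _))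

theorem summable_sq_of_memHs (hμ0 : 0 < ⨅ x, μ x) (hh0 : 0 < ⨅ x, h x)
    (hW : ∀ x y, 0 ≤ W x y) {u : V → ℝ} (hu : memHs μ W h u) : Summable fun x => u x ^ 2 := by
  refine .of_nonneg_of_le (fun x => sq_nonneg _) (fun x => ?_)
    (hu.1.mul_left ((⨅ x, h x) * (⨅ x, μ x))⁻¹)
  have hμx := ciInf_le_of_iInf_pos hμ0 x
  have hhx := ciInf_le_of_iInf_pos hh0 x
  have hgrad := gradPair_self_nonneg (hμ0.trans_le hμx).le (hW x) u
  rw [← div_eq_inv_mul, le_div_iff₀ (by positivity)]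
  have hprod : (⨅ x, h x) * (⨅ x, μ x) ≤ h x * μ x :=
    mul_le_mul hhx hμx hμ0.le (hh0.trans_le hhx).le
  nlinarith [sq_nonneg (u x), hμ0.trans_le hμx]

section

variable [DecidableEq V] {x₀ : V}

theorem gradPair_single_of_ne (u : V → ℝ) {x : V} (hx : x ≠ x₀) :
    gradPair μ W u (Pi.single x₀ 1) x = W x x₀ * (u x₀ - u x) / (2 * μ x) := by
  rw [gradPair, tsum_eq_single x₀ fun y hy => by simp [hx, hy]]
  simp only [Pi.single_eq_same, Pi.single_eq_of_ne hx]
  ring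

theorem gradPair_single_self (u : V → ℝ) :
    gradPair μ W u (Pi.single x₀ 1) x₀ = fracLaplacian μ W u x₀ / 2 := by
  have hsum :
      ∑' y, W x₀ y * (u x₀ - u y) * ((Pi.single x₀ 1 : V → ℝ) x₀ - (Pi.single x₀ 1 : V → ℝ) y)
        = ∑' y, W x₀ y * (u x₀ - u y) :=
    tsum_congr fun y => by
      by_cases hy : y = x₀
      · simp [hy]
      · simp [Pi.single_eq_of_ne hy]
  rw [gradPair, hsum, fracLaplacian]
  ring

theorem memHs_single (hμ : ∀ x, μ x ≠ 0) (hWsymm : ∀ x y, W x y = W y x)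
    (hWsum : Summable (W x₀)) : memHs μ W h (Pi.single x₀ 1) := by
  refine ⟨(hWsum.div_const 2).congr_cofinite ?_, fun _ => Pi.single x₀ 1, fun _ => ?_, ?_⟩
  · filter_upwards [eventually_cofinite_ne x₀] with x hx
    rw [gradPair_single_of_ne _ hx, Pi.single_eq_of_ne hx, hWsymm]
    field_simp [hμ x]
    simp
  · exact (Set.finite_singleton x₀).subset (Pi.support_single_subset)
  · simp [normHs, gradPair]

theorem tsum_gradPair_add_mul_single (hμ : ∀ x, μ x ≠ 0) (hWsymm : ∀ x y, W x y = W y x)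
    {u : V → ℝ} (hs : Summable fun y => W x₀ y * (u x₀ - u y)) :
    ∑' x, (gradPair μ W u (Pi.single x₀ 1) x + h x * u x * (Pi.single x₀ 1 : V → ℝ) x) * μ x
      = (fracLaplacian μ W u x₀ + h x₀ * u x₀) * μ x₀ := by
  -- Off `x₀` the pairing contributes half of the Laplacian at `x₀` (by symmetry of `W`),
  -- and the value at `x₀` contributes the other half.
  have hsplit :
      (fun x => (gradPair μ W u (Pi.single x₀ 1) x + h x * u x * (Pi.single x₀ 1 : V → ℝ) x) * μ x)
        = fun x => 1 / 2 * (W x₀ x * (u x₀ - u x))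
          + (Pi.single x₀ ((fracLaplacian μ W u x₀ / 2 + h x₀ * u x₀) * μ x₀) : V → ℝ) x := by
    funext x
    by_cases hx : x = x₀
    · subst hx
      simp [gradPair_single_self]
    · rw [gradPair_single_of_ne _ hx, Pi.single_eq_of_ne hx, Pi.single_eq_of_ne hx, hWsymm]
      field_simp [hμ x]
      ring
  rw [hsplit, (hs.mul_left _).tsum_add (hasSum_pi_single _ _).summable, tsum_mul_left,
    tsum_pi_single, fracLaplacian]
  field_simp [hμ x₀]
  ring

end

theorem IsWeakSolution.fracLaplacian_add_eq {f : V → ℝ → ℝ} {u : V → ℝ}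
    (hweak : IsWeakSolution μ W h f u) (hμ : ∀ x, μ x ≠ 0) (hWsymm : ∀ x y, W x y = W y x)
    {x₀ : V} (hWsum : Summable (W x₀)) (hs : Summable fun y => W x₀ y * (u x₀ - u y)) :
    fracLaplacian μ W u x₀ + h x₀ * u x₀ = f x₀ (u x₀) := by
  classical
  have hx₀ := hweak _ (memHs_single hμ hWsymm hWsum)
  rw [tsum_gradPair_add_mul_single hμ hWsymm hs,
    tsum_eq_single x₀ fun x hx => by simp [Pi.single_eq_of_ne hx]] at hx₀
  simpa [hμ x₀] using hx₀

theorem fracLaplacian_nonpos_of_forall_le {u : V → ℝ} {x : V} (hμ : 0 ≤ μ x)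
    (hW : ∀ y, 0 ≤ W x y) (hmin : ∀ y, u x ≤ u y) : fracLaplacian μ W u x ≤ 0 :=
  mul_nonpos_of_nonneg_of_nonpos (by positivity)
    (tsum_nonpos fun y => mul_nonpos_of_nonneg_of_nonpos (hW y) (sub_nonpos.2 (hmin y)))

theorem eq_of_fracLaplacian_eq_zero_of_forall_le {u : V → ℝ} {x : V} (hμ : μ x ≠ 0)
    (hW : ∀ y, x ≠ y → 0 < W x y) (hs : Summable fun y => W x y * (u x - u y))
    (hmin : ∀ y, u x ≤ u y) (hlap : fracLaplacian μ W u x = 0) (y : V) : u y = u x := by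
  have hnonneg : ∀ y, 0 ≤ W x y * (u y - u x) := fun y => by
    rcases eq_or_ne x y with rfl | hy
    · simp
    · exact mul_nonneg (hW y hy).le (sub_nonneg.2 (hmin y))
  have hsum : HasSum (fun y => W x y * (u y - u x)) 0 := by
    have hzero : ∑' y, W x y * (u x - u y) = 0 := by simpa [fracLaplacian, hμ] using hlap
    have hneg := hs.neg.hasSum
    rw [tsum_neg, hzero, neg_zero] at hneg
    simpa only [← mul_neg, neg_sub] using hneg
  have hy := congrFun ((hasSum_zero_iff_of_nonneg hnonneg).1 hsum) y
  rcases eq_or_ne x y with rfl | hxy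
  · rfl
  · exact sub_eq_zero.1 ((mul_eq_zero.1 hy).resolve_left (hW y hxy).ne')

end

theorem nontrivial_weak_solution_strictly_positive_general
    {V : Type*}
    (μ : V → ℝ) (hμ : ∀ x, 0 < μ x) (hμ0 : 0 < ⨅ x, μ x)
    (W : V → V → ℝ)
    (hWsymm : ∀ x y, W x y = W y x)
    (hWnonneg : ∀ x y, 0 ≤ W x y)
    (hWpos : ∀ x y, x ≠ y → 0 < W x y)
    (hWsum : ∀ x, Summable fun y => W x y)
    (h : V → ℝ) (hh0 : 0 < ⨅ x, h x)
    (f : V → ℝ → ℝ) (hf : ∀ x, ∀ y : ℝ, y ≤ 0 → f x y = 0)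
    (u : V → ℝ) (hu : memHs μ W h u) (hune : u ≠ 0)
    (hweak : ∀ φ : V → ℝ, memHs μ W h φ →
      ∑' x, (gradPair μ W u φ x + h x * u x * φ x) * μ x
        = ∑' x, f x (u x) * φ x * μ x) :
    ∀ x, 0 < u x := by
  have hh : ∀ x, 0 < h x := fun x => hh0.trans_le (ciInf_le_of_iInf_pos hh0 x)
  have hu0 : Tendsto u cofinite (𝓝 0) :=
    tendsto_cofinite_zero_of_summable_sq (summable_sq_of_memHs hμ0 hh0 hWnonneg hu)
  have hs : ∀ x₀, Summable fun y => W x₀ y * (u x₀ - u y) := fun x₀ =>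
    (hWsum x₀).mul_of_tendsto_cofinite (tendsto_const_nhds.sub hu0)
  have heq : ∀ x, fracLaplacian μ W u x + h x * u x = f x (u x) := fun x =>
    IsWeakSolution.fracLaplacian_add_eq hweak (fun x => (hμ x).ne') hWsymm (hWsum x) (hs x)
  have hnonneg : ∀ x, 0 ≤ u x := by
    by_contra! ⟨x₁, hx₁⟩
    obtain ⟨x₀, hmin⟩ := exists_forall_le_of_tendsto_cofinite_zero hu0 hx₁
    have hneg : u x₀ < 0 := (hmin x₁).trans_lt hx₁
    have hlap := fracLaplacian_nonpos_of_forall_le (hμ x₀).le (hWnonneg x₀) hmin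
    linarith [heq x₀, hf x₀ _ hneg.le, mul_neg_of_pos_of_neg (hh x₀) hneg]
  intro x
  refine (hnonneg x).lt_of_ne' fun hx => hune (funext fun y => ?_)
  have hlap : fracLaplacian μ W u x = 0 := by simpa [hx, hf x 0 le_rfl] using heq x
  exact (eq_of_fracLaplacian_eq_zero_of_forall_le (hμ x).ne' (hWpos x) (hs x)
    (fun y => hx ▸ hnonneg y) hlap y).trans hx

/-- If `f(x,y) = 0` for `y ≤ 0` and `u ∈ H_s` is a nontrivial weak solution of
`(−Δ)^s u + h u = f(x,u)`, then `u` is strictly positive. -/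
theorem nontrivial_weak_solution_strictly_positive
    {V : Type*} [Countable V] [Infinite V]
    (μ : V → ℝ) (hμ : ∀ x, 0 < μ x) (hμ0 : 0 < ⨅ x, μ x)
    (W : V → V → ℝ)
    (hWsymm : ∀ x y, W x y = W y x)
    (hWdiag : ∀ x, W x x = 0)
    (hWnonneg : ∀ x y, 0 ≤ W x y)
    (hWpos : ∀ x y, x ≠ y → 0 < W x y)
    (hWsum : ∀ x, Summable fun y => W x y)
    (h : V → ℝ) (hh0 : 0 < ⨅ x, h x)
    (f : V → ℝ → ℝ) (hf : ∀ x, ∀ y : ℝ, y ≤ 0 → f x y = 0)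
    (u : V → ℝ) (hu : memHs μ W h u) (hune : u ≠ 0)
    (hweak : ∀ φ : V → ℝ, memHs μ W h φ →
      ∑' x, (gradPair μ W u φ x + h x * u x * φ x) * μ x
        = ∑' x, f x (u x) * φ x * μ x) :
    ∀ x, 0 < u x :=
  nontrivial_weak_solution_strictly_positive_general μ hμ hμ0 W hWsymm hWnonneg hWpos hWsum h hh0 f
    hf u hu hune hweak
end

section
/- Assume μ₀ := inf_{x∈V} μ(x) > 0 and that f satisfies (F2) and (F3). Then there exists a nonnegative function u ∈ H_s, u ≢ 0, such that J_+(t u) → −∞ as t → +∞. -/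
open Filter Topology

/-- The primitive `F(x,y) = ∫_0^y f(x,t) dt`. -/
noncomputable def Fprim {V : Type*} (f : V → ℝ → ℝ) (x : V) (y : ℝ) : ℝ :=
  ∫ t in (0:ℝ)..y, f x t

/-- The functional `J_+(u) = (1/2)‖u‖²_{H_s} − ∫_V F(x, u⁺) dμ`. -/
noncomputable def Jp {V : Type*} (μ : V → ℝ) (W : V → V → ℝ) (h : V → ℝ) (f : V → ℝ → ℝ)
    (u : V → ℝ) : ℝ :=
  (1 / 2) * (∑' x, (gradPair μ W u u x + h x * (u x) ^ 2) * μ x)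
    - ∑' x, Fprim f x (max (u x) 0) * μ x

/-- Under (F2) and (F3) there is a nonnegative nontrivial `u ∈ H_s` with `J_+(tu) → −∞` as
`t → +∞`. -/
theorem mountain_pass_geometry_negative_direction
    {V : Type*} [Countable V] [Infinite V]
    (μ : V → ℝ) (hμ : ∀ x, 0 < μ x) (hμ0 : 0 < ⨅ x, μ x)
    (W : V → V → ℝ)
    (hWsymm : ∀ x y, W x y = W y x)
    (hWdiag : ∀ x, W x x = 0)
    (hWnonneg : ∀ x y, 0 ≤ W x y)
    (hWsum : ∀ x, Summable fun y => W x y)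
    (h : V → ℝ) (hh0 : 0 < ⨅ x, h x)
    (f : V → ℝ → ℝ)
    (hf2 : ∀ M : ℝ, 0 < M → ∃ C : ℝ, ∀ x, ∀ y : ℝ, |y| ≤ M → |f x y| ≤ C)
    (α : ℝ) (hα : 2 < α)
    (hf3 : ∀ x, ∀ y : ℝ, y ≠ 0 →
      0 < α * Fprim f x y ∧ α * Fprim f x y ≤ y * f x y) :
    ∃ u : V → ℝ, memHs μ W h u ∧ (∀ x, 0 ≤ u x) ∧ u ≠ 0 ∧
      Tendsto (fun t : ℝ => Jp μ W h f (fun x => t * u x)) atTop atBot := by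
  classical
  obtain ⟨x₀⟩ : Nonempty V := inferInstance
  have hα0 : (0:ℝ) < α := by linarith
  -- positivity of h
  have hhx : ∀ x, 0 < h x := by
    intro x
    by_cases hb : BddBelow (Set.range h)
    · exact lt_of_lt_of_le hh0 (ciInf_le hb x)
    · rw [Real.iInf_of_not_bddBelow hb] at hh0; exact absurd hh0 (lt_irrefl 0)
  -- the candidate function
  set u : V → ℝ := fun x => if x = x₀ then 1 else 0 with hu
  have hux₀ : u x₀ = 1 := by simp [hu]
  have hune : ∀ x, x ≠ x₀ → u x = 0 := by intro x hx; simp [hu, hx]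
  -- properties of F := Fprim f x₀
  set F : ℝ → ℝ := fun y => Fprim f x₀ y with hF
  have hFpos : ∀ y : ℝ, 0 < y → 0 < F y := by
    intro y hy
    have h1 := (hf3 x₀ y (ne_of_gt hy)).1
    rcases mul_pos_iff.mp h1 with ⟨_, hfy⟩ | ⟨hneg, _⟩
    · exact hfy
    · linarith
  have hfpos : ∀ s : ℝ, 0 < s → 0 < f x₀ s := by
    intro s hs
    obtain ⟨h1, h2⟩ := hf3 x₀ s (ne_of_gt hs)
    have h3 : 0 < s * f x₀ s := lt_of_lt_of_le h1 h2
    rcases mul_pos_iff.mp h3 with ⟨_, hfy⟩ | ⟨hneg, _⟩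
    · exact hfy
    · linarith
  have hInt : ∀ y : ℝ, 0 < y → IntervalIntegrable (f x₀) MeasureTheory.volume 0 y := by
    intro y hy
    by_contra hni
    have h0 : F y = 0 := intervalIntegral.integral_undef hni
    have := hFpos y hy
    linarith
  have hIntab : ∀ a b : ℝ, 0 < a → a ≤ b →
      IntervalIntegrable (f x₀) MeasureTheory.volume a b := by
    intro a b ha hab
    have hb : 0 < b := lt_of_lt_of_le ha hab
    refine (hInt b hb).mono_set ?_
    rw [Set.uIcc_of_le hab, Set.uIcc_of_le hb.le]
    exact Set.Icc_subset_Icc ha.le le_rfl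
  have hdiff : ∀ a b : ℝ, 0 < a → a ≤ b → F b = F a + ∫ s in a..b, f x₀ s := by
    intro a b ha hab
    have key := intervalIntegral.integral_add_adjacent_intervals (hInt a ha) (hIntab a b ha hab)
    simp only [hF, Fprim]
    linarith [key]
  have hmono : ∀ a b : ℝ, 0 < a → a ≤ b → F a ≤ F b := by
    intro a b ha hab
    have hnn : 0 ≤ ∫ s in a..b, f x₀ s :=
      intervalIntegral.integral_nonneg hab (fun s hs => (hfpos s (lt_of_lt_of_le ha hs.1)).le)
    have := hdiff a b ha hab
    linarith
  have hstep : ∀ a b : ℝ, 0 < a → a ≤ b → (1 + α * Real.log (b/a)) * F a ≤ F b := by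
    intro a b ha hab
    have hb : 0 < b := lt_of_lt_of_le ha hab
    have hcont : IntervalIntegrable (fun s : ℝ => (α * F a) * s⁻¹) MeasureTheory.volume a b := by
      apply ContinuousOn.intervalIntegrable
      apply ContinuousOn.mul continuousOn_const
      apply ContinuousOn.inv₀ continuousOn_id
      intro s hs
      rw [Set.uIcc_of_le hab] at hs
      exact ne_of_gt (lt_of_lt_of_le ha hs.1)
    have hptwise : ∀ s ∈ Set.Icc a b, (α * F a) * s⁻¹ ≤ f x₀ s := by
      intro s hs
      have hs0 : 0 < s := lt_of_lt_of_le ha hs.1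
      have h1 : α * F a ≤ α * F s :=
        mul_le_mul_of_nonneg_left (hmono a s ha hs.1) hα0.le
      have h2 := (hf3 x₀ s (ne_of_gt hs0)).2
      have h3 : (α * F a) * s⁻¹ ≤ (s * f x₀ s) * s⁻¹ :=
        mul_le_mul_of_nonneg_right (le_trans h1 h2) (inv_nonneg.mpr hs0.le)
      calc (α * F a) * s⁻¹ ≤ (s * f x₀ s) * s⁻¹ := h3
        _ = f x₀ s := by
            rw [mul_comm s, mul_assoc, mul_inv_cancel₀ hs0.ne', mul_one]
    have hcmp : (∫ s in a..b, (α * F a) * s⁻¹) ≤ ∫ s in a..b, f x₀ s :=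
      intervalIntegral.integral_mono_on hab hcont (hIntab a b ha hab) hptwise
    have hclc : (∫ s in a..b, (α * F a) * s⁻¹) = (α * F a) * Real.log (b/a) := by
      rw [intervalIntegral.integral_const_mul]
      congr 1
      apply integral_inv
      rw [Set.uIcc_of_le hab]
      intro hmem
      exact absurd hmem.1 (not_le.mpr ha)
    have := hdiff a b ha hab
    have hexp : (1 + α * Real.log (b/a)) * F a = F a + (α * F a) * Real.log (b/a) := by ring
    linarith [hcmp, hclc]
  -- the geometric parameters
  obtain ⟨δ, hδ0, hδ1, hδα⟩ : ∃ δ : ℝ, 0 < δ ∧ δ ≤ 1 ∧ 8 * δ ≤ α - 2 :=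
    ⟨min 1 ((α - 2)/8), lt_min one_pos (by linarith), min_le_left _ _, by
      have := min_le_right (1:ℝ) ((α - 2)/8); linarith⟩
  obtain ⟨r, hr⟩ : ∃ r : ℝ, r = 1 + δ := ⟨_, rfl⟩
  have hr1 : 1 < r := by rw [hr]; linarith
  have hr0 : 0 < r := by linarith
  have hlogr : δ / r ≤ Real.log r := by
    have h1 := Real.log_le_sub_one_of_pos (inv_pos.mpr hr0)
    rw [Real.log_inv] at h1
    have h2 : δ / r = 1 - r⁻¹ := by rw [hr]; field_simp; ring
    linarith
  have hlogr0 : 0 < Real.log r := Real.log_pos hr1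
  obtain ⟨K, hK⟩ : ∃ K : ℝ, K = 1 + α * Real.log r := ⟨_, rfl⟩
  have hK1 : 1 < K := by
    have : 0 < α * Real.log r := mul_pos hα0 hlogr0
    rw [hK]; linarith
  have hK0 : 0 < K := by linarith
  have hKr : r^2 < K := by
    have hpoly : (r^2 - 1) * r < α * δ := by
      have h4 : (2 + 8*δ) * δ ≤ α * δ :=
        mul_le_mul_of_nonneg_right (by linarith) hδ0.le
      have h5 : δ^3 ≤ δ^2 := pow_le_pow_of_le_one hδ0.le hδ1 (by norm_num)
      have h6 : 0 < δ^2 := by positivity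
      have h7 : (r^2 - 1) * r = 2*δ + 3*δ^2 + δ^3 := by rw [hr]; ring
      linarith [h4, h5, h6, h7]
    have h2 : r^2 - 1 < α * δ / r := (lt_div_iff₀ hr0).mpr hpoly
    have h3 : α * δ / r ≤ α * Real.log r := by
      rw [mul_div_assoc]
      exact mul_le_mul_of_nonneg_left hlogr hα0.le
    rw [hK]
    linarith
  obtain ⟨q, hq⟩ : ∃ q : ℝ, q = r^2 / K := ⟨_, rfl⟩
  have hq0 : 0 ≤ q := by rw [hq]; positivity
  have hq1 : q < 1 := by rw [hq]; exact (div_lt_one hK0).mpr hKr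
  -- iterated growth
  have hpow : ∀ n : ℕ, K^n * F 1 ≤ F (r^n) := by
    intro n
    induction n with
    | zero => simp
    | succ n ih =>
      have hrn : (0:ℝ) < r^n := pow_pos hr0 n
      have hrn1 : r^n ≤ r^(n+1) := pow_le_pow_right₀ hr1.le (Nat.le_succ n)
      have hquot : r^(n+1) / r^n = r := by
        rw [pow_succ]
        field_simp
      have hs := hstep (r^n) (r^(n+1)) hrn hrn1
      rw [hquot] at hs
      have hK' : K * (K^n * F 1) ≤ K * F (r^n) :=
        mul_le_mul_of_nonneg_left ih hK0.le
      calc K^(n+1) * F 1 = K * (K^n * F 1) := by ring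
        _ ≤ K * F (r^n) := hK'
        _ = (1 + α * Real.log r) * F (r^n) := by rw [hK]
        _ ≤ F (r^(n+1)) := hs
  -- band estimate
  have hband : ∀ t : ℝ, 1 ≤ t →
      K ^ (⌊Real.logb r t⌋₊) * F 1 ≤ F t ∧ t^2 ≤ (r^2)^(⌊Real.logb r t⌋₊ + 1) := by
    intro t ht
    have ht0 : 0 < t := lt_of_lt_of_le one_pos ht
    set n := ⌊Real.logb r t⌋₊ with hn
    have hlogb0 : 0 ≤ Real.logb r t := Real.logb_nonneg hr1 ht
    have h1 : (n:ℝ) ≤ Real.logb r t := Nat.floor_le hlogb0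
    have h2 : Real.logb r t < (n:ℝ) + 1 := Nat.lt_floor_add_one _
    have hrlogb : r ^ Real.logb r t = t := Real.rpow_logb hr0 hr1.ne' ht0
    have hrn : r^n ≤ t := by
      calc (r:ℝ)^n = r ^ ((n:ℝ)) := (Real.rpow_natCast r n).symm
        _ ≤ r ^ (Real.logb r t) := (Real.rpow_le_rpow_left_iff hr1).mpr h1
        _ = t := hrlogb
    have htr : t ≤ r^(n+1) := by
      calc t = r ^ (Real.logb r t) := hrlogb.symm
        _ ≤ r ^ (((n:ℝ) + 1)) := (Real.rpow_le_rpow_left_iff hr1).mpr h2.le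
        _ = r^(n+1) := by
            rw [← Real.rpow_natCast r (n+1)]
            push_cast
            ring_nf
    constructor
    · exact le_trans (hpow n) (hmono _ _ (pow_pos hr0 n) hrn)
    · have hsq : t^2 ≤ (r^(n+1))^2 := pow_le_pow_left₀ (le_trans zero_le_one ht) htr 2
      calc t^2 ≤ (r^(n+1))^2 := hsq
        _ = (r^2)^(n+1) := by rw [← pow_mul, ← pow_mul, Nat.mul_comm]
  -- energy density of u
  set G : V → ℝ := fun x => (gradPair μ W u u x + h x * (u x)^2) * μ x with hG
  set A : ℝ := ∑' x, G x with hA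
  have hscale : ∀ t : ℝ, ∀ x,
      (gradPair μ W (fun x => t * u x) (fun x => t * u x) x + h x * (t * u x)^2) * μ x
        = t^2 * G x := by
    intro t x
    have hts : (∑' y, W x y * (t * u x - t * u y) * (t * u x - t * u y))
        = t^2 * ∑' y, W x y * (u x - u y) * (u x - u y) := by
      rw [← tsum_mul_left]
      exact tsum_congr fun y => by ring
    simp only [hG, gradPair, hts]
    ring
  have htsum1 : ∀ t : ℝ,
      (∑' x, (gradPair μ W (fun x => t * u x) (fun x => t * u x) x + h x * (t * u x)^2) * μ x)
        = t^2 * A := by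
    intro t
    rw [hA, ← tsum_mul_left]
    exact tsum_congr (hscale t)
  have htsum2 : ∀ t : ℝ, 0 ≤ t →
      (∑' x, Fprim f x (max (t * u x) 0) * μ x) = F t * μ x₀ := by
    intro t ht
    have hptw : ∀ x, Fprim f x (max (t * u x) 0) * μ x
        = if x = x₀ then F t * μ x₀ else 0 := by
      intro x
      by_cases hx : x = x₀
      · subst hx; rw [if_pos rfl, hux₀, mul_one, max_eq_left ht]
      · rw [if_neg hx, hune x hx, mul_zero, max_self]
        have h0 : Fprim f x 0 = 0 := intervalIntegral.integral_same
        rw [h0, zero_mul]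
    rw [tsum_congr hptw]
    exact tsum_ite_eq x₀ _
  have hJp : ∀ t : ℝ, 0 ≤ t →
      Jp μ W h f (fun x => t * u x) = (1/2) * (t^2 * A) - F t * μ x₀ := by
    intro t ht
    rw [Jp, htsum1 t, htsum2 t ht]
  -- summability of the energy density
  have hGx : ∀ x, x ≠ x₀ → G x = W x₀ x / 2 := by
    intro x hx
    have htsum : (∑' y, W x y * (u x - u y) * (u x - u y)) = W x x₀ := by
      have hptw : ∀ y, W x y * (u x - u y) * (u x - u y)
          = if y = x₀ then W x x₀ else 0 := by
        intro y
        by_cases hy : y = x₀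
        · subst hy; rw [if_pos rfl, hune x hx, hux₀]; ring
        · rw [if_neg hy, hune x hx, hune y hy]; ring
      rw [tsum_congr hptw]
      exact tsum_ite_eq x₀ _
    have hμx : μ x ≠ 0 := (hμ x).ne'
    simp only [hG, gradPair, htsum]
    rw [hune x hx, hWsymm x x₀]
    field_simp [hμx]
    try ring
  have hGsummable : Summable G := by
    have hrepr : G = fun x => W x₀ x / 2 + (if x = x₀ then G x₀ - W x₀ x₀ / 2 else 0) := by
      funext x
      by_cases hx : x = x₀
      · subst hx; rw [if_pos rfl]; ring
      · rw [if_neg hx, hGx x hx, add_zero]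
    rw [hrepr]
    exact ((hWsum x₀).div_const 2).add ((hasSum_ite_eq x₀ _).summable)
  -- membership in H_s
  have hmem : memHs μ W h u := by
    refine ⟨hGsummable, fun _ => u, fun k => ?_, ?_⟩
    · refine Set.Finite.subset (Set.finite_singleton x₀) ?_
      intro x hx
      rcases eq_or_ne x x₀ with hxx | hxx
      · exact Set.mem_singleton_iff.mpr hxx
      · exact absurd (hune x hxx) hx
    · simp only [sub_self]
      have h0 : normHs μ W h (fun _ : V => (0:ℝ)) = 0 := by
        simp [normHs, gradPair]
      rw [h0]
      exact tendsto_const_nhds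
  have hnonneg : ∀ x, 0 ≤ u x := by
    intro x
    by_cases hx : x = x₀
    · rw [hx, hux₀]; norm_num
    · rw [hune x hx]
  have hune0 : u ≠ 0 := by
    intro hcontra
    simpa [hux₀] using congrFun hcontra x₀
  have hGnonneg : ∀ x, 0 ≤ G x := by
    intro x
    have h1 : 0 ≤ ∑' y, W x y * (u x - u y) * (u x - u y) := by
      apply tsum_nonneg
      intro y
      have he : W x y * (u x - u y) * (u x - u y) = W x y * (u x - u y)^2 := by ring
      rw [he]
      exact mul_nonneg (hWnonneg x y) (sq_nonneg _)
    have h2 : 0 ≤ gradPair μ W u u x := by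
      simp only [gradPair]
      have h3 : (0:ℝ) ≤ 1 / (2 * μ x) := div_nonneg zero_le_one (by linarith [hμ x])
      exact mul_nonneg h3 h1
    simp only [hG]
    exact mul_nonneg (add_nonneg h2 (mul_nonneg (hhx x).le (sq_nonneg _))) (hμ x).le
  have hA0 : 0 ≤ A := by rw [hA]; exact tsum_nonneg hGnonneg
  have hFμ : 0 < F 1 * μ x₀ := mul_pos (hFpos 1 one_pos) (hμ x₀)
  refine ⟨u, hmem, hnonneg, hune0, ?_⟩
  have hcomp : Tendsto (fun t : ℝ => (1/2) * ((r^2)^(⌊Real.logb r t⌋₊ + 1) * A)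
      - K ^ (⌊Real.logb r t⌋₊) * (F 1 * μ x₀)) atTop atBot := by
    have hφ : Tendsto (fun m : ℕ => (1/2) * ((r^2)^(m+1) * A) - K^m * (F 1 * μ x₀))
        atTop atBot := by
      have hqK : q * K = r^2 := by rw [hq]; field_simp
      have hfeq : ∀ m : ℕ, (1/2) * ((r^2)^(m+1) * A) - K^m * (F 1 * μ x₀)
          = K^m * ((1/2) * (r^2) * A * q^m - F 1 * μ x₀) := by
        intro m
        have h1 : (r^2)^(m+1) = (q^m * K^m) * r^2 := by
          rw [pow_succ, ← hqK, mul_pow]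
        rw [h1]; ring
      simp only [hfeq]
      have hinner : Tendsto (fun m : ℕ => (1/2) * (r^2) * A * q^m - F 1 * μ x₀)
          atTop (𝓝 (-(F 1 * μ x₀))) := by
        have h0 : Tendsto (fun m : ℕ => q^m) atTop (𝓝 0) :=
          tendsto_pow_atTop_nhds_zero_of_lt_one hq0 hq1
        have := (h0.const_mul ((1/2) * (r^2) * A)).sub_const (F 1 * μ x₀)
        simpa using this
      exact Filter.Tendsto.atTop_mul_neg (by linarith)
        (tendsto_pow_atTop_atTop_of_one_lt hK1) hinner
    exact hφ.comp (tendsto_nat_floor_atTop.comp (Real.tendsto_logb_atTop hr1))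
  refine tendsto_atBot_mono' atTop ?_ hcomp
  filter_upwards [eventually_ge_atTop (1:ℝ)] with t ht
  obtain ⟨hb1, hb2⟩ := hband t ht
  have ht0 : (0:ℝ) ≤ t := by linarith
  rw [hJp t ht0]
  have hA2 : (1/2) * (t^2 * A) ≤ (1/2) * ((r^2)^(⌊Real.logb r t⌋₊ + 1) * A) := by
    have := mul_le_mul_of_nonneg_right hb2 hA0
    linarith
  have hF2 : K ^ (⌊Real.logb r t⌋₊) * (F 1 * μ x₀) ≤ F t * μ x₀ := by
    have := mul_le_mul_of_nonneg_right hb1 (hμ x₀).le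
    linarith [this]
  linarith
end

section
/- Assume μ₀ := inf_{x∈V} μ(x) > 0 and that f satisfies (F1), (F2), (F3) and (F4). Then there exists r > 0 such that inf{ J_+(u) : u ∈ H_s, ‖u‖_{H_s} = r } > 0. -/
open Filter Topology

/-- `λ₁ = inf{ ‖u‖²_{H_s}/‖u‖²_2 : u ∈ H_s, u ≢ 0 }`. -/
noncomputable def lam1 {V : Type*} (μ : V → ℝ) (W : V → V → ℝ) (h : V → ℝ) : ℝ :=
  sInf {r : ℝ | ∃ u : V → ℝ, memHs μ W h u ∧ u ≠ 0 ∧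
    r = (normHs μ W h u) ^ 2 / (∑' x, (u x) ^ 2 * μ x)}

/-- Auxiliary arithmetic lemma for the mountain-pass estimate. -/
lemma aux_mp_arith (lam ε r T A S : ℝ) (hε : 0 < ε) (hlamε : 0 < lam - ε)
    (hS : 0 ≤ S) (hT : T = r ^ 2) (hA : A ≤ (lam - ε) / 2 * S) (hl : lam * S ≤ r ^ 2) :
    ε / (2 * lam) * r ^ 2 ≤ 1 / 2 * T - A := by
  have hlam : 0 < lam := by linarith
  rw [div_mul_eq_mul_div, div_le_iff₀ (by linarith : (0:ℝ) < 2 * lam)]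
  nlinarith [mul_le_mul_of_nonneg_left hA hlam.le, mul_le_mul_of_nonneg_left hl hlamε.le]

/-- Under (F1)–(F4) there exists `r > 0` with `inf{ J_+(u) : u ∈ H_s, ‖u‖_{H_s} = r } > 0`. -/
theorem mountain_pass_geometry_positive_ring
    {V : Type*} [Countable V] [Infinite V]
    (μ : V → ℝ) (hμ : ∀ x, 0 < μ x) (hμ0 : 0 < ⨅ x, μ x)
    (W : V → V → ℝ)
    (hWsymm : ∀ x y, W x y = W y x)
    (hWdiag : ∀ x, W x x = 0)
    (hWnonneg : ∀ x y, 0 ≤ W x y)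
    (hWsum : ∀ x, Summable fun y => W x y)
    (h : V → ℝ) (hh0 : 0 < ⨅ x, h x)
    (f : V → ℝ → ℝ)
    (hf1 : ∀ x, Continuous (f x) ∧ f x 0 = 0)
    (hf2 : ∀ M : ℝ, 0 < M → ∃ C : ℝ, ∀ x, ∀ y : ℝ, |y| ≤ M → |f x y| ≤ C)
    (α : ℝ) (hα : 2 < α)
    (hf3 : ∀ x, ∀ y : ℝ, y ≠ 0 →
      0 < α * Fprim f x y ∧ α * Fprim f x y ≤ y * f x y)
    (hf4 : ∃ ε > (0:ℝ), ∃ δ > (0:ℝ), ∀ x, ∀ y : ℝ, y ≠ 0 → |y| < δ →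
      f x y / y ≤ lam1 μ W h - ε) :
    ∃ r > (0:ℝ), ∃ c > (0:ℝ), ∀ u : V → ℝ,
      memHs μ W h u → normHs μ W h u = r → c ≤ Jp μ W h f u := by
  classical
  obtain ⟨ε, hε, δ, hδ, hf4'⟩ := hf4
  set lam := lam1 μ W h with hlamdef
  -- bounded below
  have hBddh : BddBelow (Set.range h) := by
    by_contra hb
    rw [show (⨅ x, h x) = sInf (Set.range h) from rfl,
      Real.sInf_of_not_bddBelow hb] at hh0
    exact lt_irrefl _ hh0
  have hBddμ : BddBelow (Set.range μ) := by
    by_contra hb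
    rw [show (⨅ x, μ x) = sInf (Set.range μ) from rfl,
      Real.sInf_of_not_bddBelow hb] at hμ0
    exact lt_irrefl _ hμ0
  set h0 := ⨅ x, h x with h0def
  set μ0 := ⨅ x, μ x with μ0def
  have hh : ∀ x, h0 ≤ h x := fun x => ciInf_le hBddh x
  have hμx : ∀ x, μ0 ≤ μ x := fun x => ciInf_le hBddμ x
  -- nonnegativity of the gradient pairing
  have hgrad : ∀ (u : V → ℝ) (x : V), 0 ≤ gradPair μ W u u x := by
    intro u x
    unfold gradPair
    apply mul_nonneg
    · have := hμ x; positivity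
    · apply tsum_nonneg
      intro y
      have hrw : W x y * (u x - u y) * (u x - u y) = W x y * (u x - u y) ^ 2 := by ring
      rw [hrw]
      exact mul_nonneg (hWnonneg x y) (sq_nonneg _)
  -- bound on F for small positive y
  have hFb : ∀ (x : V) (y : ℝ), 0 < y → y < δ → Fprim f x y ≤ (lam - ε) / 2 * y ^ 2 := by
    intro x y hy hyδ
    have hint : IntervalIntegrable (f x) MeasureTheory.volume 0 y :=
      ((hf1 x).1).intervalIntegrable _ _
    have hint2 : IntervalIntegrable (fun t => (lam - ε) * t) MeasureTheory.volume 0 y :=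
      (continuous_const.mul continuous_id).intervalIntegrable _ _
    have hmono : ∀ t ∈ Set.Icc (0:ℝ) y, f x t ≤ (lam - ε) * t := by
      rintro t ⟨ht0, hty⟩
      rcases eq_or_lt_of_le ht0 with h' | h'
      · rw [← h', (hf1 x).2]; simp
      · have hle := hf4' x t h'.ne' (by rw [abs_of_pos h']; linarith)
        have : f x t = f x t / t * t := by field_simp
        rw [this]
        exact mul_le_mul_of_nonneg_right hle ht0
    have hstep := intervalIntegral.integral_mono_on hy.le hint hint2 hmono
    calc Fprim f x y ≤ ∫ t in (0:ℝ)..y, (lam - ε) * t := hstep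
      _ = (lam - ε) * ((y ^ 2 - 0 ^ 2) / 2) := by
          rw [intervalIntegral.integral_const_mul, integral_id]
      _ = (lam - ε) / 2 * y ^ 2 := by ring
  -- lam - ε > 0
  obtain ⟨x0⟩ : Nonempty V := inferInstance
  have hlamε : 0 < lam - ε := by
    have h1 := (hf3 x0 (δ / 2) (by positivity)).1
    have h2 := hFb x0 (δ / 2) (by positivity) (by linarith)
    have hF : 0 < Fprim f x0 (δ / 2) := by
      by_contra hc
      push_neg at hc
      nlinarith
    have hδ2 : 0 < (δ / 2 : ℝ) ^ 2 := by positivity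
    nlinarith
  have hlampos : 0 < lam := by linarith
  have hrpos : 0 < δ / 2 * Real.sqrt (h0 * μ0) :=
    mul_pos (by linarith) (Real.sqrt_pos.mpr (mul_pos hh0 hμ0))
  refine ⟨δ / 2 * Real.sqrt (h0 * μ0), hrpos,
    ε / (2 * lam) * (δ / 2 * Real.sqrt (h0 * μ0)) ^ 2,
    mul_pos (div_pos hε (by linarith)) (pow_pos hrpos 2), ?_⟩
  set r := δ / 2 * Real.sqrt (h0 * μ0) with hrdef
  intro u hu hnorm
  have hr2 : r ^ 2 = δ ^ 2 / 4 * (h0 * μ0) := by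
    rw [hrdef, mul_pow, Real.sq_sqrt (mul_pos hh0 hμ0).le]; ring
  set T := ∑' x, (gradPair μ W u u x + h x * (u x) ^ 2) * μ x with hTdef
  have hterm : ∀ x, 0 ≤ (gradPair μ W u u x + h x * (u x) ^ 2) * μ x := by
    intro x
    have h1 := hgrad u x
    have h2 := hh x
    have h3 := (hμ x).le
    have h4 := sq_nonneg (u x)
    exact mul_nonneg (add_nonneg h1 (mul_nonneg (le_trans hh0.le h2) h4)) h3
  have hTnn : 0 ≤ T := tsum_nonneg hterm
  have hTr : T = r ^ 2 := by
    have hsq := Real.sq_sqrt hTnn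
    rw [show Real.sqrt T = normHs μ W h u from rfl, hnorm] at hsq
    linarith
  have hSum := hu.1
  have hSu2 : Summable (fun x => (u x) ^ 2 * μ x) := by
    apply Summable.of_nonneg_of_le
      (fun x => mul_nonneg (sq_nonneg _) (hμ x).le) (fun x => ?_)
      (hSum.mul_left (1 / h0))
    rw [one_div, inv_mul_eq_div, le_div_iff₀ hh0]
    have h1 := mul_nonneg (hgrad u x) (hμ x).le
    have h2 := mul_nonneg (mul_nonneg (sub_nonneg.2 (hh x)) (sq_nonneg (u x))) (hμ x).le
    nlinarith
  set S := ∑' x, (u x) ^ 2 * μ x with hSdef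
  have hle_tsum : ∀ x, (u x) ^ 2 * μ x ≤ S :=
    fun x => Summable.le_tsum hSu2 x (fun y _ => mul_nonneg (sq_nonneg _) (hμ y).le)
  have h0S : h0 * S ≤ T := by
    rw [hSdef, ← tsum_mul_left]
    apply Summable.tsum_le_tsum _ (hSu2.mul_left h0) hSum
    intro x
    have h1 := mul_nonneg (hgrad u x) (hμ x).le
    have h2 := mul_nonneg (mul_nonneg (sub_nonneg.2 (hh x)) (sq_nonneg (u x))) (hμ x).le
    nlinarith
  have hsup : ∀ x, (u x) ^ 2 ≤ δ ^ 2 / 4 := by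
    intro x
    have h1 := hle_tsum x
    have h2 := hμx x
    have h3 : h0 * S ≤ r ^ 2 := by rw [← hTr]; exact h0S
    have h4 := sq_nonneg (u x)
    have hS4 : S ≤ δ ^ 2 / 4 * μ0 := by nlinarith
    nlinarith [mul_le_mul_of_nonneg_left h2 h4, hμ0]
  have hFnn : ∀ x, 0 ≤ Fprim f x (max (u x) 0) := by
    intro x
    rcases eq_or_ne (max (u x) 0) 0 with h' | h'
    · rw [h']
      unfold Fprim
      rw [intervalIntegral.integral_same]
    · have := (hf3 x _ h').1
      nlinarith
  have hFle : ∀ x, Fprim f x (max (u x) 0) * μ x ≤ (lam - ε) / 2 * ((u x) ^ 2 * μ x) := by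
    intro x
    have hm2 : (max (u x) 0) ^ 2 ≤ (u x) ^ 2 := by
      rcases le_total (u x) 0 with h' | h'
      · rw [max_eq_right h']; simpa using sq_nonneg (u x)
      · rw [max_eq_left h']
    rcases eq_or_ne (max (u x) 0) 0 with h' | h'
    · rw [h']
      have hz : Fprim f x 0 = 0 := intervalIntegral.integral_same
      rw [hz, zero_mul]
      exact mul_nonneg (by linarith) (mul_nonneg (sq_nonneg _) (hμ x).le)
    · have hpos : 0 < max (u x) 0 := lt_of_le_of_ne (le_max_right _ _) (Ne.symm h')
      have hlt : max (u x) 0 < δ := by nlinarith [hsup x]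
      calc Fprim f x (max (u x) 0) * μ x
          ≤ (lam - ε) / 2 * (max (u x) 0) ^ 2 * μ x :=
            mul_le_mul_of_nonneg_right (hFb x _ hpos hlt) (hμ x).le
        _ ≤ (lam - ε) / 2 * (u x) ^ 2 * μ x :=
            mul_le_mul_of_nonneg_right
              (mul_le_mul_of_nonneg_left hm2 (by linarith : (0:ℝ) ≤ (lam - ε) / 2))
              (hμ x).le
        _ = (lam - ε) / 2 * ((u x) ^ 2 * μ x) := by ring
  have hFsummable : Summable (fun x => Fprim f x (max (u x) 0) * μ x) :=
    Summable.of_nonneg_of_le (fun x => mul_nonneg (hFnn x) (hμ x).le) hFle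
      (hSu2.mul_left _)
  have hFsum : (∑' x, Fprim f x (max (u x) 0) * μ x) ≤ (lam - ε) / 2 * S := by
    calc (∑' x, Fprim f x (max (u x) 0) * μ x)
        ≤ ∑' x, (lam - ε) / 2 * ((u x) ^ 2 * μ x) :=
          Summable.tsum_le_tsum hFle hFsummable (hSu2.mul_left _)
      _ = (lam - ε) / 2 * S := tsum_mul_left
  have hune : u ≠ 0 := by
    intro h0'
    rw [h0'] at hnorm
    simp [normHs, gradPair] at hnorm
    exact hrpos.ne hnorm
  obtain ⟨xw, hxw⟩ := Function.ne_iff.mp hune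
  have hSpos : 0 < S := by
    have hxw2 : 0 < (u xw) ^ 2 := by
      rw [← sq_abs]
      exact pow_pos (abs_pos.mpr hxw) 2
    exact lt_of_lt_of_le (mul_pos hxw2 (hμ xw)) (hle_tsum xw)
  have hbdd : BddBelow {r : ℝ | ∃ v : V → ℝ, memHs μ W h v ∧ v ≠ 0 ∧
      r = (normHs μ W h v) ^ 2 / (∑' x, (v x) ^ 2 * μ x)} := by
    refine ⟨0, ?_⟩
    rintro t ⟨v, -, -, rfl⟩
    exact div_nonneg (sq_nonneg _)
      (tsum_nonneg fun x => mul_nonneg (sq_nonneg _) (hμ x).le)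
  have hlamle : lam ≤ r ^ 2 / S := by
    have hmem : (normHs μ W h u) ^ 2 / (∑' x, (u x) ^ 2 * μ x) ∈
        {r : ℝ | ∃ v : V → ℝ, memHs μ W h v ∧ v ≠ 0 ∧
          r = (normHs μ W h v) ^ 2 / (∑' x, (v x) ^ 2 * μ x)} := ⟨u, hu, hune, rfl⟩
    have := csInf_le hbdd hmem
    rw [hnorm] at this
    exact this
  have hlamS : lam * S ≤ r ^ 2 := (le_div_iff₀ hSpos).mp hlamle
  have hJ : Jp μ W h f u = 1 / 2 * T - ∑' x, Fprim f x (max (u x) 0) * μ x := rfl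
  rw [hJ]
  exact aux_mp_arith lam ε r T (∑' x, Fprim f x (max (u x) 0) * μ x) S hε hlamε
    hSpos.le hTr hFsum hlamS
end
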